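/- arXiv:math/0409069 — 5 statements merged into one kernel-verified Lean document; each statement's English description precedes it below -/
import Mathlib

section
/- Let A be a set whose cardinality is strictly less than cov(M). Then for all n ≥ 1 and k ≥ 1: for every countable ω-cover 𝒰 of A and every coloring c of the n-element subsets of 𝒰 with k colors, there exist a color j and a subfamily 𝒱 ⊆ 𝒰 which is an ω-cover of A such that every n-element subset of 𝒱 receives color j under c. -/
open Filter Set

/-- `f ≤* g`: `f n ≤ g n` for all but finitely many `n`. -/
def LeStar (f g : ℕ → ℕ) : Prop := ∀ᶠ n in Filter.atTop, f n ≤ g n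

/-- A subset of Baire space is bounded if it has a `≤*`-upper bound. -/
def BddFam (B : Set (ℕ → ℕ)) : Prop := ∃ g : ℕ → ℕ, ∀ f ∈ B, LeStar f g

/-- A subset of Baire space is dominating if every function is `≤*` below some member. -/
def DominatingFam (D : Set (ℕ → ℕ)) : Prop := ∀ g : ℕ → ℕ, ∃ f ∈ D, LeStar g f

/-- An open cover of a topological space. -/
def IsOpenCover {X : Type*} [TopologicalSpace X] (𝒰 : Set (Set X)) : Prop :=
  (∀ U ∈ 𝒰, IsOpen U) ∧ ⋃₀ 𝒰 = Set.univ

/-- The cover `𝒰` contains a finite subcover. -/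
def HasFinSubcover {X : Type*} (𝒰 : Set (Set X)) : Prop :=
  ∃ ℱ ⊆ 𝒰, ℱ.Finite ∧ ⋃₀ ℱ = Set.univ

/-- The Hurewicz property `Ufin(O,Γ)`. -/
def UfinOGamma (X : Type*) [TopologicalSpace X] : Prop :=
  ∀ 𝒰 : ℕ → Set (Set X),
    (∀ n, IsOpenCover (𝒰 n)) → (∀ n, ¬ HasFinSubcover (𝒰 n)) →
    ∃ ℱ : ℕ → Set (Set X),
      (∀ n, ℱ n ⊆ 𝒰 n ∧ (ℱ n).Finite) ∧
      ∀ x : X, ∀ᶠ n in Filter.atTop, x ∈ ⋃₀ ℱ n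

/-- An `ω`-cover: no single member covers the whole space, but every finite set is
contained in some member. -/
def IsOmegaCover {X : Type*} (𝒰 : Set (Set X)) : Prop :=
  ⋃₀ 𝒰 = Set.univ ∧ (∀ U ∈ 𝒰, U ≠ Set.univ) ∧
    ∀ F : Set X, F.Finite → ∃ U ∈ 𝒰, F ⊆ U

/-- A `γ`-cover: an infinite cover such that every point belongs to all but finitely many
members. -/
def IsGammaCover {X : Type*} (𝒰 : Set (Set X)) : Prop :=
  𝒰.Infinite ∧ ⋃₀ 𝒰 = Set.univ ∧ ∀ x : X, {U ∈ 𝒰 | x ∉ U}.Finite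

/-- An open `ω`-cover. -/
def IsOpenOmegaCover {X : Type*} [TopologicalSpace X] (𝒰 : Set (Set X)) : Prop :=
  (∀ U ∈ 𝒰, IsOpen U) ∧ IsOmegaCover 𝒰

/-- `cov(M)`: the minimal cardinality of a family of meager sets of reals covering `ℝ`. -/
noncomputable def covM : Cardinal :=
  sInf { c : Cardinal | ∃ 𝓜 : Set (Set ℝ), (∀ M ∈ 𝓜, IsMeagre M) ∧
    ⋃₀ 𝓜 = Set.univ ∧ Cardinal.mk 𝓜 = c }


section Generic
variable {Q : Type} (R : Q → Q → Prop) (P : ℕ → Q) (q0 : Q)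

open Classical in
noncomputable def traj (b : ℕ → Bool) : ℕ → Q × ℕ
  | 0 => (q0, 0)
  | (m+1) =>
    let s := traj b m
    if b m = true then
      (if R s.1 (P s.2) then (P s.2, 0) else (s.1, s.2 + 1))
    else (s.1, s.2 + 1)

lemma traj_congr (b b' : ℕ → Bool) (m : ℕ) (h : ∀ j < m, b j = b' j) :
    traj R P q0 b m = traj R P q0 b' m := by
  induction m with
  | zero => rfl
  | succ m ih =>
      simp only [traj]
      rw [ih (fun j hj => h j (by omega)), h m (by omega)]

lemma traj_step (hrefl : ∀ q, R q q) (b : ℕ → Bool) (m : ℕ) :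
    R (traj R P q0 b m).1 (traj R P q0 b (m+1)).1 := by
  simp only [traj]
  split_ifs with h1 h2
  · exact h2
  · exact hrefl _
  · exact hrefl _

lemma traj_mono (hrefl : ∀ q, R q q) (htrans : Transitive R) (b : ℕ → Bool)
    {m m' : ℕ} (h : m ≤ m') : R (traj R P q0 b m).1 (traj R P q0 b m').1 := by
  induction m' with
  | zero => obtain rfl : m = 0 := by omega
            exact hrefl _
  | succ m' ih =>
      rcases Nat.lt_or_ge m (m'+1) with hlt | hge
      · exact htrans (ih (by omega)) (traj_step R P q0 hrefl b m')
      · obtain rfl : m = m' + 1 := by omega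
        exact hrefl _

lemma traj_run (b : ℕ → Bool) (N L r : ℕ) (q : Q)
    (hT : traj R P q0 b N = (q, r))
    (hR : R q (P (r + L)))
    (h0 : ∀ j, j < L → b (N+j) = false) (h1 : b (N+L) = true) :
    traj R P q0 b (N+L+1) = (P (r + L), 0) := by
  have key : ∀ j, j ≤ L → traj R P q0 b (N+j) = (q, r+j) := by
    intro j hj
    induction j with
    | zero => simpa using hT
    | succ i ih =>
        have hi : traj R P q0 b (N+i) = (q, r+i) := ih (by omega)
        have hNi : N + (i+1) = (N+i) + 1 := by omega
        rw [hNi]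
        simp only [traj, hi, h0 i (by omega)]
        simp [Nat.add_assoc]
  have hNL : traj R P q0 b (N+L) = (q, r+L) := key L le_rfl
  show traj R P q0 b ((N+L)+1) = _
  simp only [traj, h1, if_true]
  rw [hNL]
  simp [hR]

end Generic

noncomputable def bitR (x : ℝ) (m : ℕ) : Bool := decide (⌊x * 2^(m+1)⌋ % 2 = 1)

lemma floor_div_nat' (y : ℝ) (d : ℕ) (hd : 0 < d) : ⌊y / (d:ℝ)⌋ = ⌊y⌋ / (d:ℤ) := by
  have hd' : (0:ℝ) < (d:ℝ) := by exact_mod_cast hd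
  have hdz : (0:ℤ) < (d:ℤ) := by exact_mod_cast hd
  apply eq_of_forall_le_iff
  intro z
  rw [Int.le_floor, le_div_iff₀ hd', Int.le_ediv_iff_mul_le hdz, Int.le_floor]
  push_cast
  rfl

lemma floor_scale {M : ℤ} {p : ℕ} {x : ℝ}
    (hx : x ∈ Set.Ico ((M:ℝ)/2^p) (((M:ℝ)+1)/2^p)) {m : ℕ} (hm : m < p) :
    ⌊x * 2^(m+1)⌋ = M / 2^(p-m-1) := by
  have h2p : (0:ℝ) < 2^p := by positivity
  have hP : ⌊x * 2^p⌋ = M := by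
    rw [Int.floor_eq_iff]
    constructor
    · exact (div_le_iff₀ h2p).mp hx.1
    · have h := (lt_div_iff₀ h2p).mp hx.2
      linarith
  have hpow : ((2:ℝ))^(m+1) * 2^(p-m-1) = 2^p := by
    rw [← pow_add]; congr 1; omega
  have hx2 : x * 2^(m+1) = (x * 2^p) / ((2^(p-m-1) : ℕ) : ℝ) := by
    rw [eq_div_iff (by positivity)]
    push_cast
    rw [mul_assoc, hpow]
  rw [hx2, floor_div_nat' _ _ (by positivity), hP]
  norm_num

lemma traj_dense_interior {Q : Type} (R : Q → Q → Prop) (p : ℕ → Q) (q0 : Q)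
    (hp : Function.Surjective p)
    (D : Q → Prop) (hdense : ∀ q, ∃ q', R q q' ∧ D q') :
    Dense (interior {x : ℝ |
      ∃ m, D ((traj R (fun v => p (Nat.unpair v).1) q0 (bitR x) m).1)}) := by
  set P : ℕ → Q := fun v => p (Nat.unpair v).1 with hPdef
  set B : Set ℝ := {x : ℝ | ∃ m, D ((traj R P q0 (bitR x) m).1)} with hBdef
  rw [dense_iff_inter_open]
  rintro U hU ⟨x0, hx0⟩
  obtain ⟨ε, hε, hball⟩ := Metric.isOpen_iff.mp hU x0 hx0
  rw [Real.ball_eq_Ioo] at hball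
  -- choose N with 2/2^N < ε
  obtain ⟨N, hN⟩ := pow_unbounded_of_one_lt (2/ε) (one_lt_two : (1:ℝ) < 2)
  have h2N : (0:ℝ) < 2^N := by positivity
  have hNε : 2/(2:ℝ)^N < ε := by
    rw [div_lt_iff₀ h2N]
    rw [div_lt_iff₀ hε] at hN
    linarith
  set k : ℤ := ⌊x0 * 2^N⌋ + 1 with hk
  have hIk : Set.Ico ((k:ℝ)/2^N) (((k:ℝ)+1)/2^N) ⊆ Set.Ioo (x0-ε) (x0+ε) := by
    intro y hy
    have h1 : x0 * 2^N < k := by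
      have := Int.lt_floor_add_one (x0 * 2^N)
      push_cast [hk]
      linarith
    have h2 : (k:ℝ) + 1 ≤ x0 * 2^N + 2 := by
      have := Int.floor_le (x0 * 2^N)
      push_cast [hk]
      linarith
    constructor
    · have : x0 < (k:ℝ)/2^N := by rw [lt_div_iff₀ h2N]; linarith
      linarith [hy.1, this]
    · have : ((k:ℝ)+1)/2^N ≤ x0 + 2/2^N := by
        rw [div_le_iff₀ h2N]
        have : (x0 + 2/2^N) * 2^N = x0 * 2^N + 2 := by field_simp
        linarith [this, h2]
      calc y < ((k:ℝ)+1)/2^N := hy.2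
        _ ≤ x0 + 2/2^N := this
        _ < x0 + ε := by linarith
  -- state after reading N bits of the left endpoint
  set x1 : ℝ := (k:ℝ)/2^N with hx1
  have hx1mem : x1 ∈ Set.Ico ((k:ℝ)/2^N) (((k:ℝ)+1)/2^N) := by
    constructor
    · exact le_refl _
    · rw [hx1, div_lt_div_iff_of_pos_right h2N]
      linarith
  set st := traj R P q0 (bitR x1) N with hst
  obtain ⟨q', hq'R, hq'D⟩ := hdense st.1
  obtain ⟨a, ha⟩ := hp q'
  set v : ℕ := Nat.pair a st.2 with hv
  have hrv : st.2 ≤ v := Nat.right_le_pair a st.2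
  set L : ℕ := v - st.2 with hL
  have hvL : st.2 + L = v := by omega
  have hPv : P v = q' := by rw [hPdef]; simp only [hv, Nat.unpair_pair]; exact ha
  set p' : ℕ := N + L + 1 with hp'
  set M : ℤ := k * 2^(L+1) + 1 with hM
  have h2p' : (0:ℝ) < 2^p' := by positivity
  have hpow : (2:ℝ)^p' = 2^N * 2^(L+1) := by
    rw [← pow_add]
    congr 1
    try omega
  have h2L : (2:ℝ) ≤ 2^(L+1) := by
    calc (2:ℝ) = 2^1 := (pow_one 2).symm
    _ ≤ 2^(L+1) := by
      apply pow_le_pow_right₀ one_le_two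
      omega
  have hsub : Set.Ico ((M:ℝ)/2^p') (((M:ℝ)+1)/2^p')
      ⊆ Set.Ico ((k:ℝ)/2^N) (((k:ℝ)+1)/2^N) := by
    intro y hy
    have e1 : (k:ℝ) * 2^p' ≤ (M:ℝ) * 2^N := by
      push_cast [hM]
      rw [hpow]
      nlinarith [h2N.le]
    have e2 : ((M:ℝ)+1) * 2^N ≤ ((k:ℝ)+1) * 2^p' := by
      push_cast [hM]
      rw [hpow]
      nlinarith [h2N.le, h2L]
    constructor
    · have := (div_le_div_iff₀ h2N h2p').mpr e1
      exact this.trans hy.1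
    · refine lt_of_lt_of_le hy.2 ?_
      exact (div_le_div_iff₀ h2p' h2N).mpr e2
  have hbitlow : ∀ y ∈ Set.Ico ((M:ℝ)/2^p') (((M:ℝ)+1)/2^p'),
      ∀ j < N, bitR y j = bitR x1 j := by
    intro y hy j hj
    unfold bitR
    rw [floor_scale (hsub hy) hj, floor_scale hx1mem hj]
  have hbitmid : ∀ y ∈ Set.Ico ((M:ℝ)/2^p') (((M:ℝ)+1)/2^p'),
      ∀ j < L, bitR y (N + j) = false := by
    intro y hy j hj
    unfold bitR
    rw [floor_scale hy (show N + j < p' by omega)]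
    have hred : p' - (N+j) - 1 = L - j := by omega
    rw [hred]
    have hexp : (2:ℤ)^(j+1) * 2^(L-j) = 2^(L+1) := by rw [← pow_add]; congr 1; omega
    have hMsplit : M = 1 + k * 2^(j+1) * 2^(L-j) := by
      rw [hM, mul_assoc, hexp]; ring
    have hone : (1:ℤ) / 2^(L-j) = 0 := by
      apply Int.ediv_eq_zero_of_lt (by norm_num)
      calc (1:ℤ) < 2 := one_lt_two
      _ ≤ 2^(L-j) := le_self_pow₀ one_le_two (by omega)
    rw [hMsplit, Int.add_mul_ediv_right _ _ (by positivity : (0:ℤ) < 2^(L-j)).ne', hone,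
      zero_add]
    have : (2:ℤ)^(j+1) = 2^j * 2 := by rw [pow_succ]
    rw [this, ← mul_assoc]
    simp [Int.mul_emod_left]
  have hbittop : ∀ y ∈ Set.Ico ((M:ℝ)/2^p') (((M:ℝ)+1)/2^p'),
      bitR y (N + L) = true := by
    intro y hy
    unfold bitR
    rw [floor_scale hy (show N + L < p' by omega)]
    have hred : p' - (N+L) - 1 = 0 := by omega
    rw [hred, pow_zero, Int.ediv_one]
    have hMsplit : M = 1 + (k * 2^L) * 2 := by rw [hM, mul_assoc, ← pow_succ]; ring
    rw [hMsplit, Int.add_mul_emod_self_right]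
    decide
  have hIooB : Set.Ioo ((M:ℝ)/2^p') (((M:ℝ)+1)/2^p') ⊆ B := by
    intro y hy
    have hy' : y ∈ Set.Ico ((M:ℝ)/2^p') (((M:ℝ)+1)/2^p') := ⟨hy.1.le, hy.2⟩
    have hstate : traj R P q0 (bitR y) N = (st.1, st.2) := by
      rw [traj_congr R P q0 (bitR y) (bitR x1) N (fun j hj => hbitlow y hy' j hj)]
    have hrun := traj_run R P q0 (bitR y) N L st.2 st.1 hstate
      (by rw [hvL, hPv]; exact hq'R)
      (fun j hj => hbitmid y hy' j hj) (hbittop y hy')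
    refine ⟨N+L+1, ?_⟩
    rw [hrun]
    simpa [hvL, hPv] using hq'D
  have hIoone : ((M:ℝ)/2^p') < (((M:ℝ)+1)/2^p') := by
    rw [div_lt_div_iff₀ h2p' h2p']
    nlinarith [h2p']
  set y0 : ℝ := (((M:ℝ)/2^p') + (((M:ℝ)+1)/2^p'))/2 with hy0
  have hy0mem : y0 ∈ Set.Ioo ((M:ℝ)/2^p') (((M:ℝ)+1)/2^p') := by
    constructor <;> [skip; skip] <;> rw [hy0] <;> linarith [hIoone]
  refine ⟨y0, ?_, ?_⟩
  · exact hball (hIk (hsub ⟨hy0mem.1.le, hy0mem.2⟩))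
  · exact interior_maximal hIooB isOpen_Ioo hy0mem


section Ramsey
variable {k : ℕ} (𝔘 : Ultrafilter ℕ) (col : Finset ℕ → Fin k)

lemma ult_exists_fin (F : ℕ → Fin k) : ∃ j : Fin k, {i | F i = j} ∈ 𝔘 := by
  have huniv : (⋃ j ∈ (Set.univ : Set (Fin k)), {i | F i = j}) ∈ 𝔘 := by
    have he : (⋃ j ∈ (Set.univ : Set (Fin k)), {i | F i = j}) = Set.univ := by
      apply Set.eq_univ_of_forall
      intro i
      simp only [Set.mem_iUnion]
      exact ⟨F i, Set.mem_univ _, rfl⟩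
    rw [he]; exact Filter.univ_mem
  obtain ⟨j, _, hj⟩ := (Ultrafilter.finite_biUnion_mem_iff Set.finite_univ).mp huniv
  exact ⟨j, hj⟩

noncomputable def gfun : ℕ → Finset ℕ → Fin k
  | 0 => col
  | (r+1) => fun t => Classical.choose (ult_exists_fin 𝔘 (fun i => gfun r (insert i t)))

lemma gfun_succ_mem (r : ℕ) (t : Finset ℕ) :
    {i | gfun 𝔘 col r (insert i t) = gfun 𝔘 col (r+1) t} ∈ 𝔘 := by
  have h := Classical.choose_spec (ult_exists_fin 𝔘 (fun i => gfun 𝔘 col r (insert i t)))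
  simpa [gfun] using h

def GoodF (n : ℕ) (s : Finset ℕ) : Prop :=
  ∀ t ⊆ s, t.card ≤ n → gfun 𝔘 col (n - t.card) t = gfun 𝔘 col n ∅

lemma goodF_empty (n : ℕ) : GoodF 𝔘 col n ∅ := by
  intro t ht _
  have h : t = ∅ := Finset.subset_empty.mp ht
  subst h; simp

lemma goodF_extend (n : ℕ) (s : Finset ℕ) (hs : GoodF 𝔘 col n s)
    (X : Set ℕ) (hX : X ∈ 𝔘) (hcof : (𝔘 : Filter ℕ) ≤ Filter.cofinite) :
    ∃ i ∈ X, i ∉ s ∧ GoodF 𝔘 col n (insert i s) := by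
  have hY : (X ∩ {i | i ∉ s} ∩
      ⋂ t ∈ (s.powerset.filter (fun t => t.card < n)),
        {i | gfun 𝔘 col (n - t.card - 1) (insert i t) = gfun 𝔘 col n ∅}) ∈ 𝔘 := by
    refine Filter.inter_mem (Filter.inter_mem hX ?_) ?_
    · apply hcof
      have : {i : ℕ | i ∉ s} = (↑s : Set ℕ)ᶜ := rfl
      rw [this]
      exact s.finite_toSet.compl_mem_cofinite
    · apply (Filter.biInter_finset_mem _).mpr
      intro t ht
      rw [Finset.mem_filter, Finset.mem_powerset] at ht
      have h1 : n - t.card = (n - t.card - 1) + 1 := by omega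
      have h2 := gfun_succ_mem 𝔘 col (n - t.card - 1) t
      have h3 : gfun 𝔘 col ((n - t.card - 1)+1) t = gfun 𝔘 col n ∅ := by
        rw [← h1]; exact hs t ht.1 (by omega)
      rw [h3] at h2; exact h2
  obtain ⟨i, hi⟩ := Ultrafilter.nonempty_of_mem hY
  refine ⟨i, hi.1.1, hi.1.2, ?_⟩
  intro t ht hcard
  by_cases hit : i ∈ t
  · have hts : t.erase i ⊆ s := by
      intro a haa
      rcases Finset.mem_erase.mp haa with ⟨hne, hat⟩
      rcases Finset.mem_insert.mp (ht hat) with h | h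
      · exact absurd h hne
      · exact h
    have htpos : 1 ≤ t.card := Finset.card_pos.mpr ⟨i, hit⟩
    have hicard : (t.erase i).card = t.card - 1 := Finset.card_erase_of_mem hit
    have hmem : gfun 𝔘 col (n - (t.erase i).card - 1) (insert i (t.erase i))
        = gfun 𝔘 col n ∅ := by
      have hmem' := Set.mem_iInter₂.mp hi.2 (t.erase i) ?_
      · exact hmem'
      · rw [Finset.mem_filter, Finset.mem_powerset]
        exact ⟨hts, by omega⟩
    have hins : insert i (t.erase i) = t := Finset.insert_erase hit
    rw [hins] at hmem
    have harith : n - (t.erase i).card - 1 = n - t.card := by omega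
    rw [harith] at hmem
    exact hmem
  · refine hs t ?_ hcard
    intro a haa
    rcases Finset.mem_insert.mp (ht haa) with h | h
    · exact absurd (h ▸ haa) hit
    · exact h

end Ramsey


lemma exists_notMem_meagre {ι : Type} (hι : Cardinal.mk ι < covM)
    (Mi : ι → Set ℝ) (hM : ∀ i, IsMeagre (Mi i)) : ∃ x : ℝ, ∀ i, x ∉ Mi i := by
  by_contra h
  push_neg at h
  have hmem : ∃ 𝓜 : Set (Set ℝ), (∀ M ∈ 𝓜, IsMeagre M) ∧ ⋃₀ 𝓜 = Set.univ ∧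
      Cardinal.mk 𝓜 = Cardinal.mk ↥(Set.range Mi) := by
    refine ⟨Set.range Mi, ?_, ?_, rfl⟩
    · rintro _ ⟨i, rfl⟩; exact hM i
    · apply Set.eq_univ_of_forall
      intro x
      obtain ⟨i, hi⟩ := h x
      exact ⟨Mi i, ⟨i, rfl⟩, hi⟩
  have hle : covM ≤ Cardinal.mk ↥(Set.range Mi) := csInf_le' hmem
  exact lt_irrefl _ (lt_of_le_of_lt (hle.trans Cardinal.mk_range_le) hι)

theorem generic_exists {ι Q : Type} [Countable Q] [Nonempty Q]
    (hι : Cardinal.mk ι < covM) (R : Q → Q → Prop)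
    (hrefl : ∀ q, R q q) (htrans : Transitive R)
    (D : ι → Q → Prop) (hdense : ∀ q i, ∃ q', R q q' ∧ D i q') :
    ∃ f : ℕ → Q, (∀ m m', m ≤ m' → R (f m) (f m')) ∧ ∀ i, ∃ m, D i (f m) := by
  obtain ⟨p, hp⟩ := exists_surjective_nat Q
  set P : ℕ → Q := fun v => p (Nat.unpair v).1 with hP
  set q0 : Q := Classical.arbitrary Q with hq0
  set B : ι → Set ℝ := fun i => {x | ∃ m, D i ((traj R P q0 (bitR x) m).1)} with hB
  have hmeag : ∀ i, IsMeagre ((interior (B i))ᶜ) := by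
    intro i
    have hd : Dense (interior (B i)) :=
      traj_dense_interior R p q0 hp (D i) (fun q => hdense q i)
    rw [IsMeagre, compl_compl]
    exact residual_of_dense_open isOpen_interior hd
  obtain ⟨x, hx⟩ := exists_notMem_meagre hι _ hmeag
  refine ⟨fun m => (traj R P q0 (bitR x) m).1,
    fun m m' h => traj_mono R P q0 hrefl htrans _ h, fun i => ?_⟩
  have hxi : x ∈ interior (B i) := by
    have h2 := hx i
    simpa using h2
  exact interior_subset (s := B i) hxi

lemma finset_bound (g : ℕ → Finset ℕ)
    (hmono : ∀ m m', m ≤ m' → g m ⊆ g m') (t : Finset ℕ)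
    (h : ∀ i ∈ t, ∃ m, i ∈ g m) : ∃ M, ∀ i ∈ t, i ∈ g M := by
  classical
  induction t using Finset.induction_on with
  | empty => exact ⟨0, by simp⟩
  | @insert a u hnotmem ih =>
      obtain ⟨M, hM⟩ := ih (fun i hi => h i (Finset.mem_insert_of_mem hi))
      obtain ⟨m0, hm0⟩ := h _ (Finset.mem_insert_self a u)
      refine ⟨max M m0, fun i hi => ?_⟩
      rcases Finset.mem_insert.mp hi with rfl | hi
      · exact hmono m0 _ (le_max_right _ _) hm0
      · exact hmono M _ (le_max_left _ _) (hM i hi)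

/-- Scheepers: if `A` is a set of cardinality less than `cov(M)` then, for all `n, k ≥ 1`,
every countable `ω`-cover of `A` satisfies the partition relation `Ω_A → (Ω_A)ⁿ_k`. -/
theorem ramsey_below_covM (A : Type) (hA : Cardinal.mk A < covM)
    (n k : ℕ) (hn : 1 ≤ n) (hk : 1 ≤ k)
    (𝒰 : Set (Set A)) (hctbl : 𝒰.Countable) (hcov : IsOmegaCover 𝒰)
    (c : Finset (Set A) → Fin k) :
    ∃ (j : Fin k) (𝒱 : Set (Set A)), 𝒱 ⊆ 𝒰 ∧ IsOmegaCover 𝒱 ∧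
      ∀ s : Finset (Set A), ↑s ⊆ 𝒱 → s.card = n → c s = j := by
  classical
  -- A is infinite
  have hAinf : Infinite A := by
    rw [← not_finite_iff_infinite]
    intro hfin
    obtain ⟨U, hU, hUuniv⟩ := hcov.2.2 Set.univ (Set.finite_univ (α := A))
    exact hcov.2.1 U hU (Set.eq_univ_of_univ_subset hUuniv)
  haveI := hAinf
  have hpt : ∀ U ∈ 𝒰, ∃ a : A, a ∉ U := by
    intro U hU
    exact Set.ne_univ_iff_exists_notMem U |>.mp (hcov.2.1 U hU)
  set pt : Set A → A := fun U =>
    if h : ∃ a : A, a ∉ U then Classical.choose h else Classical.arbitrary A with hptdef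
  have hptspec : ∀ U ∈ 𝒰, pt U ∉ U := by
    intro U hU
    rw [hptdef]; dsimp only
    rw [dif_pos (hpt U hU)]
    exact Classical.choose_spec (hpt U hU)
  -- 𝒰 is infinite
  have h𝒰inf : 𝒰.Infinite := by
    intro hfin
    obtain ⟨U, hU, hsub⟩ := hcov.2.2 (pt '' 𝒰) (hfin.image pt)
    exact hptspec U hU (hsub (Set.mem_image_of_mem pt hU))
  -- enumerate 𝒰 injectively
  obtain ⟨d⟩ : Nonempty (Denumerable ↥𝒰) :=
    Set.countable_infinite_iff_nonempty_denumerable.mp ⟨hctbl, h𝒰inf⟩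
  set e : ℕ → Set A := fun i => ((Denumerable.eqv ↥𝒰).symm i : Set A) with hedef
  have hemem : ∀ i, e i ∈ 𝒰 := fun i => ((Denumerable.eqv ↥𝒰).symm i).2
  have heinj : Function.Injective e := by
    intro i j h
    exact (Denumerable.eqv ↥𝒰).symm.injective (Subtype.coe_injective h)
  have hesurj : ∀ U ∈ 𝒰, ∃ i, e i = U := by
    intro U hU
    refine ⟨(Denumerable.eqv ↥𝒰) ⟨U, hU⟩, ?_⟩
    rw [hedef]; simp
  -- the sets of indices of members absorbing a finite set
  set Isub : Finset A → Set ℕ := fun G => {i | (↑G : Set A) ⊆ e i} with hIsubdef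
  have hIinf : ∀ G : Finset A, (Isub G).Infinite := by
    intro G hfin
    have hFfin : ((↑G : Set A) ∪ (pt ∘ e) '' (Isub G)).Finite :=
      G.finite_toSet.union (hfin.image _)
    obtain ⟨U, hU, hsub⟩ := hcov.2.2 _ hFfin
    obtain ⟨i, rfl⟩ := hesurj U hU
    have hiG : i ∈ Isub G := fun a ha => hsub (Set.mem_union_left _ ha)
    have hpe : pt (e i) ∈ e i := hsub (Set.mem_union_right _ ⟨i, hiG, rfl⟩)
    exact hptspec (e i) (hemem i) hpe
  -- the filter generated by the `Isub G` and cofinite sets, and an ultrafilter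
  set Fl : Filter ℕ :=
    { sets := {s | ∃ G : Finset A, ((Isub G) \ s).Finite}
      univ_sets := ⟨∅, by simp⟩
      sets_of_superset := by
        rintro s t ⟨G, hG⟩ hst
        exact ⟨G, hG.subset (Set.diff_subset_diff_right hst)⟩
      inter_sets := by
        rintro s t ⟨G, hG⟩ ⟨G', hG'⟩
        refine ⟨G ∪ G', ((hG.union hG').subset ?_)⟩
        intro i hi
        have hmem : (↑(G ∪ G') : Set A) ⊆ e i := hi.1
        have h1 : i ∈ Isub G := fun a ha => hmem (by simp [ha])
        have h2 : i ∈ Isub G' := fun a ha => hmem (by simp [ha])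
        by_cases his : i ∈ s
        · exact Or.inr ⟨h2, fun hit => hi.2 ⟨his, hit⟩⟩
        · exact Or.inl ⟨h1, his⟩ } with hFl
  have hFlmem : ∀ (s : Set ℕ), s ∈ Fl ↔ ∃ G : Finset A, ((Isub G) \ s).Finite := by
    intro s; rfl
  have hFlne : Fl.NeBot := by
    rw [Filter.neBot_iff]
    intro hbot
    have h0 : (∅ : Set ℕ) ∈ Fl := by rw [hbot]; exact Filter.mem_bot
    obtain ⟨G, hG⟩ := (hFlmem ∅).mp h0
    exact hIinf G (by simpa using hG)
  set 𝔘 : Ultrafilter ℕ := Ultrafilter.of Fl with h𝔘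
  have hle : (𝔘 : Filter ℕ) ≤ Fl := Ultrafilter.of_le Fl
  have hIsubmem : ∀ G, Isub G ∈ 𝔘 := by
    intro G
    exact hle ((hFlmem _).mpr ⟨G, by simp⟩)
  have hcof : (𝔘 : Filter ℕ) ≤ Filter.cofinite := by
    refine le_trans hle ?_
    intro s hs
    refine (hFlmem _).mpr ⟨∅, Set.Finite.subset hs ?_⟩
    intro i hi
    exact hi.2
  -- transfer the colouring to ℕ and run the Ramsey machinery
  set colN : Finset ℕ → Fin k := fun t => c (t.image e) with hcolN
  set jstar : Fin k := gfun 𝔘 colN n ∅ with hjstar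
  set Q := {s : Finset ℕ // GoodF 𝔘 colN n s} with hQ
  haveI : Nonempty Q := ⟨⟨∅, goodF_empty 𝔘 colN n⟩⟩
  set R : Q → Q → Prop := fun q q' => q.1 ⊆ q'.1 with hRdef
  set D : Finset A → Q → Prop := fun G q => ∃ i ∈ q.1, (↑G : Set A) ⊆ e i with hDdef
  have hι : Cardinal.mk (Finset A) < covM := by
    rw [Cardinal.mk_finset_of_infinite]; exact hA
  have hdense : ∀ q G, ∃ q', R q q' ∧ D G q' := by
    intro q G
    obtain ⟨i, hiX, hins, hgood⟩ :=
      goodF_extend 𝔘 colN n q.1 q.2 (Isub G) (hIsubmem G) hcof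
    exact ⟨⟨insert i q.1, hgood⟩, Finset.subset_insert _ _,
      ⟨i, Finset.mem_insert_self _ _, hiX⟩⟩
  obtain ⟨f, hchain, hmeet⟩ := generic_exists hι R (fun q => Finset.Subset.refl q.1)
    (fun a b cc hab hbc => Finset.Subset.trans hab hbc) D hdense
  refine ⟨jstar, {U | ∃ m, ∃ i ∈ (f m).1, e i = U}, ?_, ⟨?_, ?_, ?_⟩, ?_⟩
  · rintro U ⟨m, i, him, rfl⟩
    exact hemem i
  · apply Set.eq_univ_of_forall
    intro a
    obtain ⟨m, i, him, hsub⟩ := hmeet {a}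
    exact ⟨e i, ⟨m, i, him, rfl⟩, hsub (by simp)⟩
  · rintro U ⟨m, i, him, rfl⟩
    exact hcov.2.1 (e i) (hemem i)
  · intro F hF
    obtain ⟨m, i, him, hsub⟩ := hmeet hF.toFinset
    refine ⟨e i, ⟨m, i, him, rfl⟩, ?_⟩
    rwa [Set.Finite.coe_toFinset] at hsub
  · intro s hs hcard
    have hex : ∀ U ∈ s, ∃ i, (∃ m, i ∈ (f m).1) ∧ e i = U := by
      intro U hU
      obtain ⟨m, i, him, hei⟩ := hs hU
      exact ⟨i, ⟨m, him⟩, hei⟩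
    set w : Set A → ℕ := fun U =>
      if h : ∃ i, (∃ m, i ∈ (f m).1) ∧ e i = U then Classical.choose h else 0 with hw
    have hwspec : ∀ U ∈ s, (∃ m, (w U) ∈ (f m).1) ∧ e (w U) = U := by
      intro U hU
      rw [hw]; dsimp only
      rw [dif_pos (hex U hU)]
      exact Classical.choose_spec (hex U hU)
    set t : Finset ℕ := s.image w with ht
    have htcard : t.card = n := by
      rw [ht, Finset.card_image_of_injOn, hcard]
      intro a ha b hb hab
      rw [← (hwspec a ha).2, ← (hwspec b hb).2, hab]
    have htimage : t.image e = s := by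
      rw [ht, Finset.image_image]
      calc s.image (e ∘ w) = s.image id := Finset.image_congr (fun U hU => (hwspec U hU).2)
        _ = s := Finset.image_id
    have htall : ∀ i ∈ t, ∃ m, i ∈ (f m).1 := by
      intro i hi
      obtain ⟨U, hU, rfl⟩ := Finset.mem_image.mp hi
      exact (hwspec U hU).1
    obtain ⟨M, hM⟩ := finset_bound (fun m => (f m).1)
      (fun m m' h => hchain m m' h) t htall
    have hgood := (f M).2 t (fun i hi => hM i hi) (by rw [htcard])
    rw [htcard, Nat.sub_self] at hgood
    have hg0 : gfun 𝔘 colN 0 t = colN t := rfl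
    rw [hg0] at hgood
    calc c s = colN t := by rw [hcolN]; dsimp only; rw [htimage]
      _ = jstar := hgood
end

section
/- 𝔭 = min{𝔭*, 𝔱}. -/
open Set

/-- `A ⊆* B`: `A ∖ B` is finite. -/
def SubStar (A B : Set ℕ) : Prop := (A \ B).Finite

/-- A family of sets of naturals is centered if each of its finite nonempty subfamilies has
infinite intersection. -/
def Centered (F : Set (Set ℕ)) : Prop :=
  ∀ G ⊆ F, G.Finite → G.Nonempty → (⋂₀ G).Infinite

/-- `F` has a pseudo-intersection: an infinite set almost contained in every member. -/
def HasPseudoIntersection (F : Set (Set ℕ)) : Prop :=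
  ∃ A : Set ℕ, A.Infinite ∧ ∀ B ∈ F, SubStar A B

/-- The pseudo-intersection number `𝔭`. -/
noncomputable def pCard : Cardinal :=
  sInf { c : Cardinal | ∃ F : Set (Set ℕ), (∀ A ∈ F, A.Infinite) ∧ Centered F ∧
    ¬ HasPseudoIntersection F ∧ Cardinal.mk F = c }

/-- The tower number `𝔱`. -/
noncomputable def tCard : Cardinal :=
  sInf { c : Cardinal | ∃ F : Set (Set ℕ), (∀ A ∈ F, A.Infinite) ∧
    (∀ A ∈ F, ∀ B ∈ F, SubStar A B ∨ SubStar B A) ∧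
    ¬ HasPseudoIntersection F ∧ Cardinal.mk F = c }

/-- `Y` is linearly refinable: each `y ∈ Y` has an infinite subset `ŷ ⊆ y` such that the
family of all the `ŷ`'s is linearly quasi-ordered by `⊆*`. -/
def LinearlyRefinable (Y : Set (Set ℕ)) : Prop :=
  ∃ r : Set ℕ → Set ℕ, (∀ y ∈ Y, (r y).Infinite ∧ r y ⊆ y) ∧
    ∀ y ∈ Y, ∀ z ∈ Y, SubStar (r y) (r z) ∨ SubStar (r z) (r y)

/-- The cardinal `𝔭*`: the minimal cardinality of a centered family of infinite sets of
naturals which is not linearly refinable. -/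
noncomputable def pStarCard : Cardinal :=
  sInf { c : Cardinal | ∃ Y : Set (Set ℕ), (∀ A ∈ Y, A.Infinite) ∧ Centered Y ∧
    ¬ LinearlyRefinable Y ∧ Cardinal.mk Y = c }

/-!
A linearly refinable centered family `F` without pseudo-intersection refines to a tower without
pseudo-intersection of size at most `|F|`, so a witness for `𝔭` is a witness either for `𝔭*` or,
after refining, for `𝔱`. Conversely towers are centered, and a pseudo-intersection `A` of `Y`
linearly refines `Y` by `y ↦ y ∩ A`; so witnesses for `𝔭*` and for `𝔱` are witnesses for `𝔭`.

As `sInf ∅ = 0` in `Cardinal`, it remains to see that the three infima range over nonempty sets.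
A maximal tower (Zorn) has no pseudo-intersection. An ultrafilter `U` that is not a P-point, such
as the Fubini square of a nonprincipal ultrafilter, is not linearly refinable: a refinement `r`
maps `U` into `U`; if `Xₙ ∈ U` have no pseudo-intersection in `U`, a pseudo-intersection `A` of
the `r Xₙ` is not in `U`, so `r Aᶜ ∈ U`. Then `r Aᶜ` is not below all `r Xₙ ⊆ Xₙ`, hence
`A ⊆* r Xₙ ⊆* r Aᶜ ⊆ Aᶜ` for some `n`, and `A` is finite.
-/

lemma SubStar.refl (A : Set ℕ) : SubStar A A := by
  simp [SubStar]

lemma subStar_of_subset {A B : Set ℕ} (h : A ⊆ B) : SubStar A B := by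
  simp [SubStar, sdiff_eq_empty.2 h]

lemma SubStar.trans {A B C : Set ℕ} (hAB : SubStar A B) (hBC : SubStar B C) : SubStar A C :=
  (hAB.union hBC).subset (sdiff_triangle A B C)

lemma SubStar.trans_subset {A B C : Set ℕ} (hAB : SubStar A B) (hBC : B ⊆ C) : SubStar A C :=
  hAB.trans (subStar_of_subset hBC)

lemma SubStar.infinite {A B : Set ℕ} (h : SubStar A B) (hA : A.Infinite) : B.Infinite :=
  fun hB => hA ((h.union hB).subset (by rw [sdiff_union_self]; exact subset_union_left))

lemma SubStar.finite_of_disjoint {A B : Set ℕ} (h : SubStar A B) (hAB : Disjoint A B) :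
    A.Finite := by
  rwa [SubStar, hAB.sdiff_eq_left] at h

lemma subStar_sInter {A : Set ℕ} {G : Set (Set ℕ)} (hG : G.Finite) (h : ∀ B ∈ G, SubStar A B) :
    SubStar A (⋂₀ G) := by
  refine (hG.biUnion h).subset fun x ⟨hxA, hx⟩ => ?_
  obtain ⟨B, hB, hxB⟩ : ∃ B ∈ G, x ∉ B := by simpa using hx
  exact mem_biUnion hB ⟨hxA, hxB⟩

def IsSubStarChain (F : Set (Set ℕ)) : Prop :=
  ∀ A ∈ F, ∀ B ∈ F, SubStar A B ∨ SubStar B A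

lemma IsSubStarChain.mono {F G : Set (Set ℕ)} (hG : IsSubStarChain G) (hFG : F ⊆ G) :
    IsSubStarChain F :=
  fun A hA B hB => hG A (hFG hA) B (hFG hB)

lemma IsSubStarChain.exists_subStar_forall {G : Set (Set ℕ)} (hG : IsSubStarChain G)
    (hfin : G.Finite) (hne : G.Nonempty) : ∃ A ∈ G, ∀ B ∈ G, SubStar A B := by
  induction G, hfin using Set.Finite.induction_on with
  | empty => exact absurd hne not_nonempty_empty
  | @insert C G _ _ ih =>
    rcases G.eq_empty_or_nonempty with rfl | hGne
    · exact ⟨C, mem_insert _ _, by simp [SubStar.refl]⟩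
    obtain ⟨A, hA, hmin⟩ := ih (hG.mono (subset_insert _ _)) hGne
    rcases hG A (mem_insert_of_mem _ hA) C (mem_insert _ _) with hAC | hCA
    · exact ⟨A, mem_insert_of_mem _ hA, forall_mem_insert.2 ⟨hAC, hmin⟩⟩
    · exact ⟨C, mem_insert _ _,
        forall_mem_insert.2 ⟨SubStar.refl C, fun B hB => hCA.trans (hmin B hB)⟩⟩

lemma IsSubStarChain.centered {F : Set (Set ℕ)} (hF : IsSubStarChain F)
    (hinf : ∀ A ∈ F, A.Infinite) : Centered F := by
  intro G hGF hfin hne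
  obtain ⟨A, hA, hmin⟩ := (hF.mono hGF).exists_subStar_forall hfin hne
  exact (subStar_sInter hfin hmin).infinite (hinf A (hGF hA))

lemma linearlyRefinable_of_hasPseudoIntersection {Y : Set (Set ℕ)}
    (h : HasPseudoIntersection Y) : LinearlyRefinable Y := by
  obtain ⟨A, hA, hAY⟩ := h
  refine ⟨fun y => y ∩ A, fun y hy => ⟨?_, inter_subset_left⟩, fun y _ z hz => Or.inl ?_⟩
  · have : SubStar A (y ∩ A) := by rw [SubStar, sdiff_inter_self_eq_sdiff]; exact hAY y hy
    exact this.infinite hA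
  · exact (hAY z hz).subset fun x hx => ⟨hx.1.2, fun hxz => hx.2 ⟨hxz, hx.1.2⟩⟩

lemma Set.Infinite.exists_subset_infinite_diff {α : Type*} {A : Set α} (hA : A.Infinite) :
    ∃ B ⊆ A, B.Infinite ∧ (A \ B).Infinite := by
  set f := hA.natEmbedding
  have hrange {g : ℕ → ℕ} (hg : g.Injective) : (range fun n => (f (g n) : α)).Infinite :=
    infinite_range_of_injective (Subtype.val_injective.comp (f.injective.comp hg))
  have hodd : (fun n => 2 * n + 1).Injective := fun m n h => by dsimp at h; omega
  refine ⟨range fun n => (f (2 * n) : α), range_subset_iff.2 fun n => (f _).2,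
    hrange fun m n h => by omega, (hrange hodd).mono ?_⟩
  rintro _ ⟨n, rfl⟩
  refine ⟨(f _).2, ?_⟩
  rintro ⟨m, hm⟩
  have := f.injective (Subtype.ext hm)
  omega

lemma exists_isSubStarChain_not_hasPseudoIntersection :
    ∃ T : Set (Set ℕ), (∀ A ∈ T, A.Infinite) ∧ IsSubStarChain T ∧ ¬ HasPseudoIntersection T := by
  obtain ⟨M, ⟨hMinf, hM⟩, hMmax⟩ := zorn_subset
    {T : Set (Set ℕ) | (∀ A ∈ T, A.Infinite) ∧ IsSubStarChain T} fun c hc hchain => by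
      refine ⟨⋃₀ c, ⟨?_, ?_⟩, fun T hT => subset_sUnion_of_mem hT⟩
      · rintro A ⟨T, hT, hAT⟩
        exact (hc hT).1 A hAT
      · rintro A ⟨T, hT, hAT⟩ B ⟨T', hT', hBT'⟩
        rcases hchain.total hT hT' with h | h
        · exact (hc hT').2 A (h hAT) B hBT'
        · exact (hc hT).2 A hAT B (h hBT')
  refine ⟨M, hMinf, hM, fun ⟨A, hA, hAM⟩ => ?_⟩
  -- a proper infinite part `B` of a pseudo-intersection would extend the chain
  obtain ⟨B, hBA, hB, hAB⟩ := hA.exists_subset_infinite_diff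
  have hBM : ∀ C ∈ M, SubStar B C := fun C hC => (hAM C hC).subset (sdiff_subset_sdiff_left hBA)
  have hBMchain : IsSubStarChain (insert B M) := by
    rintro C (rfl | hC) D (rfl | hD)
    exacts [Or.inl (SubStar.refl _), Or.inl (hBM D hD), Or.inr (hBM C hC), hM C hC D hD]
  have hBmem : B ∈ M :=
    hMmax ⟨forall_mem_insert.2 ⟨hB, hMinf⟩, hBMchain⟩ (subset_insert B M) (mem_insert B M)
  exact hAB (hAM B hBmem)

lemma hasPseudoIntersection_range_of_centered {c : ℕ → Set ℕ} (hc : Centered (range c)) :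
    HasPseudoIntersection (range c) := by
  have hinf : ∀ n, (⋂ i ≤ n, c i).Infinite := fun n => by
    simpa [sInter_image] using hc (c '' Iic n) (image_subset_range _ _) ((finite_Iic n).image c)
      (nonempty_Iic.image c)
  choose a ha hna using fun n => (hinf n).exists_gt n
  refine ⟨range a, infinite_of_not_bddAbove ?_, forall_mem_range.2 fun n => ?_⟩
  · rintro ⟨b, hb⟩
    exact (hna b).not_ge (hb ⟨b, rfl⟩)
  -- from the `n`-th term on, the sequence lies in `c n`
  refine ((finite_Iio n).image a).subset ?_
  rintro _ ⟨⟨m, rfl⟩, hm⟩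
  refine ⟨m, mem_Iio.2 (lt_of_not_ge fun hnm => hm ?_), rfl⟩
  exact mem_iInter₂.1 (ha m) n hnm

def IsPPoint (U : Ultrafilter ℕ) : Prop :=
  ∀ X : ℕ → Set ℕ, (∀ n, X n ∈ U) → ∃ S ∈ U, ∀ n, SubStar S (X n)

namespace Ultrafilter

variable {U : Ultrafilter ℕ}

lemma infinite_of_mem_of_not_isPPoint (hU : ¬ IsPPoint U) {s : Set ℕ} (hs : s ∈ U) :
    s.Infinite := fun hfin => hU fun _ _ => ⟨s, hs, fun _ => hfin.sdiff⟩

lemma centered_of_forall_mem {F : Set (Set ℕ)} (hU : ∀ s ∈ U, s.Infinite)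
    (hF : ∀ s ∈ F, s ∈ U) : Centered F :=
  fun _ hG hfin _ => hU _ ((Filter.sInter_mem hfin).2 fun s hs => hF s (hG hs))

lemma not_linearlyRefinable_of_not_isPPoint (hU : ¬ IsPPoint U) :
    ¬ LinearlyRefinable {s | s ∈ U} := by
  rintro ⟨r, hr, hlin⟩
  have hrU : ∀ y ∈ U, r y ∈ U := fun y hy => by
    by_contra hy'
    have hc : (r y)ᶜ ∈ U := compl_mem_iff_notMem.2 hy'
    have hdisj : Disjoint (r y) (r (r y)ᶜ) := disjoint_compl_right.mono_right (hr _ hc).2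
    rcases hlin y hy _ hc with h | h
    exacts [(hr y hy).1 (h.finite_of_disjoint hdisj), (hr _ hc).1 (h.finite_of_disjoint hdisj.symm)]
  obtain ⟨X, hX, hXU⟩ : ∃ X : ℕ → Set ℕ, (∀ n, X n ∈ U) ∧ ∀ S ∈ U, ¬ ∀ n, SubStar S (X n) := by
    simpa [IsPPoint] using hU
  have hrX : ∀ n, r (X n) ⊆ X n := fun n => (hr _ (hX n)).2
  obtain ⟨A, hA, hAr⟩ := hasPseudoIntersection_range_of_centered <|
    centered_of_forall_mem (fun _ => infinite_of_mem_of_not_isPPoint hU)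
      (forall_mem_range.2 fun n => hrU _ (hX n))
  replace hAr : ∀ n, SubStar A (r (X n)) := forall_mem_range.1 hAr
  have hAc : Aᶜ ∈ U :=
    compl_mem_iff_notMem.2 fun h => hXU A h fun n => (hAr n).trans_subset (hrX n)
  have hdisj : Disjoint A (r Aᶜ) := disjoint_compl_right.mono_right (hr _ hAc).2
  obtain ⟨n, hn⟩ : ∃ n, ¬ SubStar (r Aᶜ) (r (X n)) := by
    by_contra! h
    exact hXU _ (hrU _ hAc) fun n => (h n).trans_subset (hrX n)
  have hXA : SubStar (r (X n)) (r Aᶜ) := (hlin _ hAc _ (hX n)).resolve_left hn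
  exact hA (((hAr n).trans hXA).finite_of_disjoint hdisj)

lemma exists_not_isPPoint : ∃ U : Ultrafilter ℕ, ¬ IsPPoint U := by
  set V := Ultrafilter.of (Filter.cofinite : Filter ℕ)
  have hV : ∀ s : Set ℕ, s.Finite → s ∉ V := fun s hs =>
    compl_mem_iff_notMem.1 (of_le Filter.cofinite hs.compl_mem_cofinite)
  -- the Fubini square `V ⊗ V`, transported along `Nat.pair`, and its columns from `n` on
  refine ⟨V.bind fun m => V.map (Nat.pair m), fun hP => ?_⟩
  obtain ⟨S, hS, hSX⟩ := hP (fun n => {x | n ≤ x.unpair.1}) fun n => by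
    change {m | Nat.pair m ⁻¹' {x | n ≤ x.unpair.1} ∈ V} ∈ V
    filter_upwards [compl_mem_iff_notMem.2 (hV _ (finite_Iio n))] with m hm
    exact Filter.univ_mem' fun k => by simpa using hm
  have hcol (m : ℕ) : (Nat.pair m ⁻¹' S).Finite :=
    ((hSX (m + 1)).preimage (f := Nat.pair m) fun _ _ _ _ h => (Nat.pair_eq_pair.1 h).2).subset
      fun k hk => by simpa using hk
  obtain ⟨m, hm⟩ := nonempty_of_mem (show {m | Nat.pair m ⁻¹' S ∈ V} ∈ V from hS)
  exact hV _ (hcol m) hm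

end Ultrafilter

section Cardinals

open Cardinal

variable {F : Set (Set ℕ)}

lemma pCard_le_mk (hinf : ∀ A ∈ F, A.Infinite) (hF : Centered F)
    (hF' : ¬ HasPseudoIntersection F) : pCard ≤ #F :=
  csInf_le' ⟨F, hinf, hF, hF', rfl⟩

lemma tCard_le_mk (hinf : ∀ A ∈ F, A.Infinite) (hF : IsSubStarChain F)
    (hF' : ¬ HasPseudoIntersection F) : tCard ≤ #F :=
  csInf_le' ⟨F, hinf, hF, hF', rfl⟩

lemma pStarCard_le_mk (hinf : ∀ A ∈ F, A.Infinite) (hF : Centered F)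
    (hF' : ¬ LinearlyRefinable F) : pStarCard ≤ #F :=
  csInf_le' ⟨F, hinf, hF, hF', rfl⟩

lemma tCard_le_mk_of_linearlyRefinable (hF : LinearlyRefinable F)
    (hF' : ¬ HasPseudoIntersection F) : tCard ≤ #F := by
  obtain ⟨r, hr, hlin⟩ := hF
  refine (tCard_le_mk (forall_mem_image.2 fun y hy => (hr y hy).1) ?_ ?_).trans mk_image_le
  · rintro _ ⟨y, hy, rfl⟩ _ ⟨z, hz, rfl⟩
    exact hlin y hy z hz
  · rintro ⟨A, hA, hAr⟩
    exact hF' ⟨A, hA, fun y hy => (hAr _ (mem_image_of_mem r hy)).trans_subset (hr y hy).2⟩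

lemma exists_mk_eq_tCard : ∃ T : Set (Set ℕ), (∀ A ∈ T, A.Infinite) ∧ IsSubStarChain T ∧
    ¬ HasPseudoIntersection T ∧ #T = tCard :=
  let ⟨T, hinf, hT, hT'⟩ := exists_isSubStarChain_not_hasPseudoIntersection
  (csInf_mem ⟨#T, T, hinf, hT, hT', rfl⟩ : tCard ∈ _)

lemma exists_mk_eq_pCard : ∃ F : Set (Set ℕ), (∀ A ∈ F, A.Infinite) ∧ Centered F ∧
    ¬ HasPseudoIntersection F ∧ #F = pCard := by
  obtain ⟨T, hinf, hT, hT', -⟩ := exists_mk_eq_tCard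
  exact (csInf_mem ⟨#T, T, hinf, hT.centered hinf, hT', rfl⟩ : pCard ∈ _)

lemma exists_mk_eq_pStarCard : ∃ Y : Set (Set ℕ), (∀ A ∈ Y, A.Infinite) ∧ Centered Y ∧
    ¬ LinearlyRefinable Y ∧ #Y = pStarCard := by
  obtain ⟨U, hU⟩ := Ultrafilter.exists_not_isPPoint
  have hinf : ∀ s ∈ U, s.Infinite := fun _ => Ultrafilter.infinite_of_mem_of_not_isPPoint hU
  exact (csInf_mem ⟨_, _, hinf, Ultrafilter.centered_of_forall_mem hinf fun _ h => h,
    Ultrafilter.not_linearlyRefinable_of_not_isPPoint hU, rfl⟩ : pStarCard ∈ _)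

end Cardinals

/-- `𝔭 = min{𝔭*, 𝔱}`. -/
theorem p_eq_min_pStar_t : pCard = min pStarCard tCard := by
  refine le_antisymm (le_min ?_ ?_) ?_
  · obtain ⟨Y, hinf, hY, hY', hmk⟩ := exists_mk_eq_pStarCard
    exact hmk ▸ pCard_le_mk hinf hY (mt linearlyRefinable_of_hasPseudoIntersection hY')
  · obtain ⟨T, hinf, hT, hT', hmk⟩ := exists_mk_eq_tCard
    exact hmk ▸ pCard_le_mk hinf (hT.centered hinf) hT'
  · obtain ⟨F, hinf, hF, hF', hmk⟩ := exists_mk_eq_pCard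
    rw [← hmk]
    by_cases hr : LinearlyRefinable F
    · exact min_le_of_right_le (tCard_le_mk_of_linearlyRefinable hr hF')
    · exact min_le_of_left_le (pStarCard_le_mk hinf hF hr)
end

section
/- The minimal cardinality of a γ-family 𝒜 ⊆ {0,1}^{ℕ×ℕ} which is not finitely τ-diagonalizable is exactly 𝔟. -/
open Filter Set

/-- A `γ`-array: `A : {0,1}^{ℕ×ℕ}` with `(∀ n)(∀^∞ m) A(n,m) = 1`. -/
def GammaArray (A : ℕ × ℕ → Bool) : Prop :=
  ∀ n : ℕ, ∀ᶠ m in Filter.atTop, A (n, m) = true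

/-- A `γ`-family: a family of `γ`-arrays. -/
def GammaFamily (𝒜 : Set (ℕ × ℕ → Bool)) : Prop := ∀ A ∈ 𝒜, GammaArray A

/-- A family `𝒜 ⊆ {0,1}^{ℕ×ℕ}` is finitely `τ`-diagonalizable if there are finite sets
`F n ⊆ ℕ` such that (a) each `A ∈ 𝒜` has `(∃^∞ n)(∃ m ∈ F n) A(n,m) = 1`, and (b) any two
members of `𝒜` are comparable on the `F n`'s, eventually in `n`. -/
def FinitelyTauDiagonalizable (𝒜 : Set (ℕ × ℕ → Bool)) : Prop :=
  ∃ F : ℕ → Finset ℕ,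
    (∀ A ∈ 𝒜, ∃ᶠ n in Filter.atTop, ∃ m ∈ F n, A (n, m) = true) ∧
    ∀ A ∈ 𝒜, ∀ B ∈ 𝒜,
      (∀ᶠ n in Filter.atTop, ∀ m ∈ F n, A (n, m) ≤ B (n, m)) ∨
      (∀ᶠ n in Filter.atTop, ∀ m ∈ F n, B (n, m) ≤ A (n, m))

/-- The unbounding number `𝔟`. -/
noncomputable def bCard : Cardinal :=
  sInf { c : Cardinal | ∃ B : Set (ℕ → ℕ), ¬ BddFam B ∧ Cardinal.mk B = c }

/-!
If `#𝒜 < 𝔟`, one function `g` eventually exceeds, in every row, the point from which each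
`A ∈ 𝒜` is constantly `1`; the singletons `F n = {g n}` then diagonalize `𝒜`, as all its members
are eventually `1` on them.

Conversely, let `B` be an unbounded family of `𝔟` monotone functions and take the arrays that
vanish exactly on a band `[f n, g n)` of row `n`, with `f, g ∈ B ∪ {0}`. If `F` diagonalized
them, unboundedness would give `f₀ ∈ B` lying above the nonempty `F n` infinitely often. Comparing
the threshold array of `f₀` with the band `[f₀ n, g n)` then forces `F n` to avoid that band, so
the points of `F n` above `f₀ n`, which exist infinitely often, bound every `g ∈ B` by
monotonicity.
-/

open Filter

lemma bddFam_of_countable {B : Set (ℕ → ℕ)} (hB : B.Countable) : BddFam B := by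
  rcases B.eq_empty_or_nonempty with rfl | hne
  · exact ⟨0, fun f hf => hf.elim⟩
  obtain ⟨u, rfl⟩ := hB.exists_eq_range hne
  refine ⟨fun n => (Finset.range (n + 1)).sup (u · n), ?_⟩
  rintro _ ⟨i, rfl⟩
  filter_upwards [eventually_ge_atTop i] with n hn
  exact Finset.le_sup (f := (u · n)) (Finset.mem_range.mpr (Nat.lt_succ_of_le hn))

lemma not_bddFam_univ : ¬ BddFam Set.univ := by
  rintro ⟨g, hg⟩
  obtain ⟨n, hn⟩ := (hg (g · + 1) trivial).exists
  exact Nat.not_succ_le_self _ hn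

lemma exists_not_bddFam_mk_eq_bCard :
    ∃ B : Set (ℕ → ℕ), ¬ BddFam B ∧ Cardinal.mk B = bCard :=
  csInf_mem (s := {c | ∃ B : Set (ℕ → ℕ), ¬ BddFam B ∧ Cardinal.mk B = c})
    ⟨_, Set.univ, not_bddFam_univ, rfl⟩

lemma bddFam_of_mk_lt_bCard {B : Set (ℕ → ℕ)} (hB : Cardinal.mk B < bCard) : BddFam B := by
  by_contra hunb
  exact (csInf_le' ⟨B, hunb, rfl⟩ : bCard ≤ _).not_gt hB

lemma aleph0_le_bCard : Cardinal.aleph0 ≤ bCard := by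
  obtain ⟨B, hunb, hB⟩ := exists_not_bddFam_mk_eq_bCard
  by_contra! hlt
  rw [← hB, Cardinal.lt_aleph0_iff_set_finite] at hlt
  exact hunb (bddFam_of_countable hlt.countable)

lemma exists_monotone_not_bddFam_mk_le_bCard :
    ∃ B : Set (ℕ → ℕ), (∀ f ∈ B, Monotone f) ∧ ¬ BddFam B ∧ Cardinal.mk B ≤ bCard := by
  obtain ⟨B, hunb, hB⟩ := exists_not_bddFam_mk_eq_bCard
  refine ⟨(fun f => ⇑(partialSups f)) '' B, ?_, ?_, hB ▸ Cardinal.mk_image_le⟩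
  · rintro _ ⟨f, -, rfl⟩
    exact (partialSups f).monotone
  · rintro ⟨g, hg⟩
    exact hunb ⟨g, fun f hf => (hg _ ⟨f, hf, rfl⟩).mono fun n hn => (le_partialSups f n).trans hn⟩

lemma bddFam_of_frequently_le {B : Set (ℕ → ℕ)} {p : ℕ → Prop} {h : ℕ → ℕ}
    (hmono : ∀ f ∈ B, Monotone f) (hp : ∃ᶠ n in atTop, p n)
    (hle : ∀ f ∈ B, ∀ᶠ n in atTop, p n → f n ≤ h n) : BddFam B := by
  choose s hs hps using frequently_atTop.mp hp
  refine ⟨h ∘ s, fun f hf => ?_⟩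
  obtain ⟨N, hN⟩ := eventually_atTop.mp (hle f hf)
  filter_upwards [eventually_ge_atTop N] with n hn
  exact (hmono f hf (hs n)).trans (hN _ (hn.trans (hs n)) (hps n))

lemma exists_frequently_lt_of_not_bddFam {B : Set (ℕ → ℕ)} {p : ℕ → Prop}
    (hmono : ∀ f ∈ B, Monotone f) (hunb : ¬ BddFam B) (hp : ∃ᶠ n in atTop, p n) (h : ℕ → ℕ) :
    ∃ f ∈ B, ∃ᶠ n in atTop, p n ∧ h n < f n := by
  by_contra! hcon
  refine hunb (bddFam_of_frequently_le (h := h) hmono hp fun f hf => ?_)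
  simpa only [not_frequently, not_and, not_lt] using hcon f hf

lemma bCard_le_mk_of_not_finitelyTauDiagonalizable {𝒜 : Set (ℕ × ℕ → Bool)}
    (hγ : GammaFamily 𝒜) (hnd : ¬ FinitelyTauDiagonalizable 𝒜) : bCard ≤ Cardinal.mk 𝒜 := by
  by_contra! hlt
  choose N hN using fun (A : 𝒜) n => eventually_atTop.mp (hγ A A.2 n)
  obtain ⟨g, hg⟩ := bddFam_of_mk_lt_bCard (Cardinal.mk_range_le.trans_lt hlt)
  have hone : ∀ A ∈ 𝒜, ∀ᶠ n in atTop, A (n, g n) = true := fun A hA =>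
    (hg _ ⟨⟨A, hA⟩, rfl⟩).mono fun n hn => hN ⟨A, hA⟩ n _ hn
  refine hnd ⟨fun n => {g n}, fun A hA => ?_, fun A _ B hB => Or.inl ?_⟩
  · exact ((hone A hA).mono fun n hn => ⟨g n, Finset.mem_singleton_self _, hn⟩).frequently
  · filter_upwards [hone B hB] with n hn m hm
    rw [Finset.mem_singleton.mp hm, hn]
    exact Bool.le_true _

/-- The array vanishing exactly on the band `[f n, g n)` of row `n`; `bandArray 0 g` is the
threshold array of `g`. -/
def bandArray (f g : ℕ → ℕ) : ℕ × ℕ → Bool :=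
  fun p => decide (p.2 < f p.1 ∨ g p.1 ≤ p.2)

@[simp]
lemma bandArray_eq_true {f g : ℕ → ℕ} {n m : ℕ} :
    bandArray f g (n, m) = true ↔ m < f n ∨ g n ≤ m :=
  decide_eq_true_iff

lemma gammaArray_bandArray (f g : ℕ → ℕ) : GammaArray (bandArray f g) := fun n =>
  (eventually_ge_atTop (g n)).mono fun _ hm => bandArray_eq_true.mpr (Or.inr hm)

def bandFamily (B : Set (ℕ → ℕ)) : Set (ℕ × ℕ → Bool) :=
  Set.image2 bandArray (insert 0 B) (insert 0 B)

lemma gammaFamily_bandFamily (B : Set (ℕ → ℕ)) : GammaFamily (bandFamily B) := by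
  rintro _ ⟨f, -, g, -, rfl⟩
  exact gammaArray_bandArray f g

lemma mk_bandFamily_le {B : Set (ℕ → ℕ)} {κ : Cardinal} (hκ : Cardinal.aleph0 ≤ κ)
    (hB : Cardinal.mk B ≤ κ) : Cardinal.mk (bandFamily B) ≤ κ := by
  have hins : Cardinal.mk (insert 0 B : Set (ℕ → ℕ)) ≤ κ :=
    Cardinal.mk_insert_le.trans ((add_le_add_left hB 1).trans (Cardinal.add_one_eq hκ).le)
  calc Cardinal.mk (bandFamily B)
      ≤ Cardinal.mk (insert 0 B : Set (ℕ → ℕ)) * Cardinal.mk (insert 0 B : Set (ℕ → ℕ)) :=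
        Cardinal.mk_image2_le
    _ ≤ κ * κ := mul_le_mul' hins hins
    _ = κ := Cardinal.mul_eq_self hκ

/-- On a row where `F n` lies below `f₀ n`, the band `[f₀ n, g n)` is `1` and the threshold array
of `f₀` is `0`; so if this happens infinitely often, comparability must go the other way. -/
lemma eventually_le_of_comparable_bandArray {F : ℕ → Finset ℕ} {f₀ g : ℕ → ℕ}
    (hbelow : ∃ᶠ n in atTop, (F n).Nonempty ∧ ∀ m ∈ F n, m < f₀ n)
    (hcomp : (∀ᶠ n in atTop, ∀ m ∈ F n, bandArray 0 f₀ (n, m) ≤ bandArray f₀ g (n, m)) ∨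
      (∀ᶠ n in atTop, ∀ m ∈ F n, bandArray f₀ g (n, m) ≤ bandArray 0 f₀ (n, m))) :
    ∀ᶠ n in atTop, ∀ m ∈ F n, f₀ n ≤ m → g n ≤ m := by
  rcases hcomp with h | h
  · filter_upwards [h] with n hn m hm hfm
    have hband := Bool.le_iff_imp.mp (hn m hm) (bandArray_eq_true.mpr (Or.inr hfm))
    rw [bandArray_eq_true] at hband
    omega
  · obtain ⟨n, ⟨⟨m, hm⟩, hlt⟩, hn⟩ := (hbelow.and_eventually h).exists
    have hthr := Bool.le_iff_imp.mp (hn m hm) (bandArray_eq_true.mpr (Or.inl (hlt m hm)))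
    simp only [bandArray_eq_true, Pi.zero_apply] at hthr
    have hm_lt := hlt m hm
    omega

lemma not_finitelyTauDiagonalizable_bandFamily {B : Set (ℕ → ℕ)}
    (hmono : ∀ f ∈ B, Monotone f) (hunb : ¬ BddFam B) :
    ¬ FinitelyTauDiagonalizable (bandFamily B) := by
  rintro ⟨F, hhit, hcomp⟩
  have mem {f g : ℕ → ℕ} (hf : f ∈ insert 0 B) (hg : g ∈ insert 0 B) :
      bandArray f g ∈ bandFamily B :=
    Set.mem_image2_of_mem hf hg
  have h0 : (0 : ℕ → ℕ) ∈ insert 0 B := Set.mem_insert 0 B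
  have hne : ∃ᶠ n in atTop, (F n).Nonempty :=
    (hhit _ (mem h0 h0)).mono fun n ⟨m, hm, _⟩ => ⟨m, hm⟩
  obtain ⟨f₀, hf₀, hf₀above⟩ :=
    exists_frequently_lt_of_not_bddFam hmono hunb hne fun n => (F n).sup id
  have hbelow : ∃ᶠ n in atTop, (F n).Nonempty ∧ ∀ m ∈ F n, m < f₀ n :=
    hf₀above.mono fun n ⟨hn, hlt⟩ => ⟨hn, fun m hm => (Finset.le_sup (f := id) hm).trans_lt hlt⟩
  have hf₀' : f₀ ∈ insert 0 B := Set.mem_insert_of_mem 0 hf₀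
  refine hunb (bddFam_of_frequently_le hmono (p := fun n => ∃ m ∈ F n, f₀ n ≤ m)
    (h := fun n => (F n).sup id) ?_ fun g hg => ?_)
  · refine (hhit _ (mem h0 hf₀')).mono fun n ⟨m, hm, hthr⟩ => ⟨m, hm, ?_⟩
    simpa using hthr
  · have hcomp' := hcomp _ (mem h0 hf₀') _ (mem hf₀' (Set.mem_insert_of_mem 0 hg))
    filter_upwards [eventually_le_of_comparable_bandArray hbelow hcomp'] with n hn ⟨m, hm, hfm⟩
    exact (hn m hm hfm).trans (Finset.le_sup (f := id) hm)

/-- Mildenberger–Shelah et al.: the minimal cardinality of a `γ`-family that is not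
finitely `τ`-diagonalizable is `𝔟`. -/
theorem min_non_finitely_tau_diagonalizable_eq_b :
    sInf { c : Cardinal | ∃ 𝒜 : Set (ℕ × ℕ → Bool), GammaFamily 𝒜 ∧
      ¬ FinitelyTauDiagonalizable 𝒜 ∧ Cardinal.mk 𝒜 = c } = bCard := by
  obtain ⟨B, hmono, hunb, hB⟩ := exists_monotone_not_bddFam_mk_le_bCard
  have hmem : Cardinal.mk (bandFamily B) ∈ { c : Cardinal | ∃ 𝒜 : Set (ℕ × ℕ → Bool),
      GammaFamily 𝒜 ∧ ¬ FinitelyTauDiagonalizable 𝒜 ∧ Cardinal.mk 𝒜 = c } :=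
    ⟨_, gammaFamily_bandFamily B, not_finitelyTauDiagonalizable_bandFamily hmono hunb, rfl⟩
  refine le_antisymm ((csInf_le' hmem).trans (mk_bandFamily_le aleph0_le_bCard hB)) ?_
  refine le_csInf ⟨_, hmem⟩ ?_
  rintro _ ⟨𝒜, hγ, hnd, rfl⟩
  exact bCard_le_mk_of_not_finitelyTauDiagonalizable hγ hnd
end

section
/- Let X ⊆ ℝ (with the subspace topology). The following are equivalent: (1) X satisfies Sfin(B_Γ,B_Τ): for every sequence (𝒰_n) of countable Borel γ-covers of X there exist finite subsets 𝓕_n ⊆ 𝒰_n such that ⋃_n 𝓕_n is a τ-cover of X; (2) for every Borel measurable function Ψ : X → {0,1}^{ℕ×ℕ} (where {0,1}^{ℕ×ℕ} carries the product topology), if the image Ψ[X] is a γ-family, then Ψ[X] is finitely τ-diagonalizable. -/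
open Filter Set

/-- A large cover: every point belongs to infinitely many members. -/
def IsLargeCover {X : Type*} (𝒰 : Set (Set X)) : Prop :=
  ⋃₀ 𝒰 = Set.univ ∧ ∀ x : X, {U ∈ 𝒰 | x ∈ U}.Infinite

/-- A `τ`-cover: a large cover such that for all points `x, y`, one of the sets of members
separating `x` from `y` (or `y` from `x`) is finite. -/
def IsTauCover {X : Type*} (𝒰 : Set (Set X)) : Prop :=
  IsLargeCover 𝒰 ∧ ∀ x y : X,
    {U ∈ 𝒰 | x ∈ U ∧ y ∉ U}.Finite ∨ {U ∈ 𝒰 | y ∈ U ∧ x ∉ U}.Finite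

/-- A countable Borel `γ`-cover: a countably infinite family of Borel sets covering the
space, with every point in all but finitely many members. -/
def CtblBorelGammaCover {X : Type*} [TopologicalSpace X] (𝒰 : Set (Set X)) : Prop :=
  𝒰.Countable ∧ 𝒰.Infinite ∧ (∀ U ∈ 𝒰, @MeasurableSet X (borel X) U) ∧
    ⋃₀ 𝒰 = Set.univ ∧ ∀ x : X, {U ∈ 𝒰 | x ∉ U}.Finite

/-- The property `Sfin(B_Γ,B_Τ)`. -/
def SfinBGammaBTau (X : Type*) [TopologicalSpace X] : Prop :=
  ∀ 𝒰 : ℕ → Set (Set X), (∀ n, CtblBorelGammaCover (𝒰 n)) →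
    ∃ ℱ : ℕ → Set (Set X), (∀ n, ℱ n ⊆ 𝒰 n ∧ (ℱ n).Finite) ∧
      IsTauCover (⋃ n, ℱ n)


/-!
A map `Ψ : X → {0,1}^{ℕ×ℕ}` is the same thing as the double sequence of sets
`E n m = {x | Ψ x (n, m) = 1}`: Borel maps give Borel sets, γ-families give rows every point
eventually lies in, and finite sets `F n` τ-diagonalize `Ψ[X]` exactly when
`⋃ n, E n '' F n` is a τ-cover, as long as the selected pieces of different rows are disjoint.

(1) ⇒ (2): a row with only finitely many distinct sets repeats one of them infinitely often,
and that set must be all of `X`, so such rows are harmless. The other rows are countable Borel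
γ-covers; (1) selects finite pieces of them, which are then disjointified.

(2) ⇒ (1): if some cover `𝒰 k` shares infinitely many members with infinitely many `𝒰 n`,
ever larger finite pieces of `𝒰 n ∩ 𝒰 k` form an infinite subfamily of the γ-cover `𝒰 k`,
hence a τ-cover. Otherwise a subsequence of the covers is almost disjoint; disjointifying and
enumerating it yields a Borel map into γ-arrays, to which (2) applies.
-/

section

open Function MeasureTheory

variable {T : Type*}

theorem exists_finset_image_eq_of_subset_range {α β : Type*} {f : α → β} {s : Set β}
    (hs : s ⊆ range f) (hfin : s.Finite) : ∃ t : Finset α, f '' t = s := by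
  classical
  obtain ⟨t, -, ht⟩ := (Finset.subset_set_image_iff (s := univ) (t := hfin.toFinset)).1
    (by simpa only [image_univ, Finite.coe_toFinset] using hs)
  exact ⟨t, by rw [← Finset.coe_image, ht, Finite.coe_toFinset]⟩

theorem exists_subset_iUnion_eq_of_injective {ι κ α : Type*} {𝒰 : ι → Set α} {i : κ → ι}
    (hi : Injective i) {𝒢 : κ → Set α} (h𝒢 : ∀ k, 𝒢 k ⊆ 𝒰 (i k) ∧ (𝒢 k).Finite) :
    ∃ ℱ : ι → Set α, (∀ n, ℱ n ⊆ 𝒰 n ∧ (ℱ n).Finite) ∧ ⋃ n, ℱ n = ⋃ k, 𝒢 k := by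
  refine ⟨fun n => ⋃ k ∈ i ⁻¹' {n}, 𝒢 k, fun n => ⟨?_, ?_⟩, ?_⟩
  · simp only [iUnion_subset_iff, mem_preimage, mem_singleton_iff]
    rintro k rfl
    exact (h𝒢 k).1
  · exact ((finite_singleton n).preimage hi.injOn).biUnion fun k _ => (h𝒢 k).2
  · ext
    simp

theorem exists_injective_seq_inter_finite {α : Type*} {s : ℕ → Set α} (hs : ∀ n, (s n).Infinite)
    (h : ∀ k, ∀ᶠ n in atTop, (s n ∩ s k).Finite) :
    ∃ i : ℕ → ℕ, Injective i ∧ ∀ j k, j < k → (s (i k) ∩ s (i j)).Finite := by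
  obtain ⟨i, -, hi⟩ := exists_seq_of_forall_finset_exists (fun _ => True)
    (fun j n => (s n ∩ s j).Finite) fun K _ =>
      (((eventually_all_finset K).2 fun k _ => h k).exists).imp fun _ hn => ⟨trivial, hn⟩
  refine ⟨i, Injective.of_lt_imp_ne fun j k hjk hij => hs (i k) ?_, hi⟩
  simpa only [hij, inter_self] using hi j k hjk

theorem infinite_disjointed_of_inter_finite {α : Type*} {s : ℕ → Set α} {k : ℕ}
    (hs : (s k).Infinite) (h : ∀ j < k, (s k ∩ s j).Finite) : (disjointed s k).Infinite := by
  rw [disjointed_apply, Finset.sup_set_eq_biUnion]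
  refine (hs.sdiff ((Finset.Iio k).finite_toSet.biUnion fun j hj => h j (Finset.mem_Iio.1 hj))).mono
    fun V hV => ⟨hV.1, fun hV' => hV.2 ?_⟩
  obtain ⟨j, hj, hVj⟩ := mem_iUnion₂.1 hV'
  exact mem_iUnion₂.2 ⟨j, hj, hV.1, hVj⟩

theorem eventually_mem_of_injective {𝒰 : Set (Set T)} {e : ℕ → Set T} {x : T}
    (he : Injective e) (h𝒰 : range e ⊆ 𝒰) (hγ : {U ∈ 𝒰 | x ∉ U}.Finite) :
    ∀ᶠ m in atTop, x ∈ e m := by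
  rw [← Nat.cofinite_eq_atTop, eventually_cofinite]
  exact (hγ.preimage he.injOn).subset fun m hm => ⟨h𝒰 (mem_range_self m), hm⟩

theorem exists_eq_univ_of_finite_range {e : ℕ → Set T} (hfin : (range e).Finite)
    (hγ : ∀ x, ∀ᶠ m in atTop, x ∈ e m) : ∃ M, e M = univ := by
  have := hfin.to_subtype
  obtain ⟨⟨S, _⟩, hS⟩ := Finite.exists_infinite_fiber (rangeFactorization e)
  have hfreq : ∃ᶠ m in atTop, e m = S := by
    rw [Nat.frequently_atTop_iff_infinite]
    simpa [preimage, rangeFactorization, Subtype.ext_iff, infinite_coe_iff] using hS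
  obtain ⟨M, hM⟩ := hfreq.exists
  refine ⟨M, eq_univ_of_forall fun x => ?_⟩
  obtain ⟨m, hm, hxm⟩ := (hfreq.and_eventually (hγ x)).exists
  rwa [hM, ← hm]

theorem isLargeCover_iff {𝒰 : Set (Set T)} :
    IsLargeCover 𝒰 ↔ ∀ x, {U ∈ 𝒰 | x ∈ U}.Infinite := by
  refine ⟨And.right, fun h => ⟨eq_univ_of_forall fun x => ?_, h⟩⟩
  obtain ⟨U, hU, hxU⟩ := (h x).nonempty
  exact ⟨U, hU, hxU⟩

theorem isTauCover_of_infinite_of_finite_not_mem {𝒰 : Set (Set T)} (h𝒰 : 𝒰.Infinite)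
    (hγ : ∀ x, {U ∈ 𝒰 | x ∉ U}.Finite) : IsTauCover 𝒰 := by
  refine ⟨isLargeCover_iff.2 fun x => ?_,
    fun x y => Or.inl ((hγ y).subset fun U hU => ⟨hU.1, hU.2.2⟩)⟩
  exact (h𝒰.sdiff (hγ x)).mono fun U hU => ⟨hU.1, not_not.1 fun hx => hU.2 ⟨hU.1, hx⟩⟩

/-- `FinitelyTauDiagonalizable`, with witness `F`, of the arrays `(n, m) ↦ [x ∈ E n m]`, `x ∈ T`. -/
def IsTauDiagonalizer (E : ℕ → ℕ → Set T) (F : ℕ → Finset ℕ) : Prop :=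
  (∀ x, ∃ᶠ n in atTop, ∃ m ∈ F n, x ∈ E n m) ∧
    ∀ x y, (∀ᶠ n in atTop, ∀ m ∈ F n, x ∈ E n m → y ∈ E n m) ∨
      (∀ᶠ n in atTop, ∀ m ∈ F n, y ∈ E n m → x ∈ E n m)

theorem finitelyTauDiagonalizable_range_iff (Φ : T → ℕ × ℕ → Bool) :
    FinitelyTauDiagonalizable (range Φ) ↔
      ∃ F, IsTauDiagonalizer (fun n m => {x | Φ x (n, m) = true}) F := by
  simp only [FinitelyTauDiagonalizable, IsTauDiagonalizer, forall_mem_range, Bool.le_iff_imp,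
    mem_ofPred_eq]

theorem measurable_pi_bool_iff {ι : Type*} [Countable ι] {m : MeasurableSpace T}
    {Φ : T → ι → Bool} :
    @Measurable T (ι → Bool) m (borel (ι → Bool)) Φ ↔ ∀ p, MeasurableSet {x | Φ x p = true} := by
  rw [← BorelSpace.measurable_eq, measurable_pi_iff]
  exact forall_congr' fun p => ⟨fun h => h (measurableSet_singleton true), measurable_to_bool⟩

theorem finite_setOf_mem_iUnion_image_iff {E : ℕ → ℕ → Set T} {F : ℕ → Finset ℕ}
    (hdisj : Pairwise (Disjoint on fun n => E n '' F n)) (P : Set T → Prop) :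
    {V ∈ ⋃ n, E n '' F n | P V}.Finite ↔ ∀ᶠ n in atTop, ∀ m ∈ F n, ¬ P (E n m) := by
  simp only [← Nat.cofinite_eq_atTop, eventually_cofinite, not_forall, not_not, exists_prop]
  constructor
  · intro h
    refine (h.biUnion fun V _ => Subsingleton.finite fun a ha b hb =>
      hdisj.eq (not_disjoint_iff.2 ⟨V, ha, hb⟩)).subset ?_
    rintro n ⟨m, hm, hP⟩
    exact mem_biUnion ⟨mem_iUnion.2 ⟨n, m, hm, rfl⟩, hP⟩ ⟨m, hm, rfl⟩
  · intro h
    refine (h.biUnion fun n _ => (F n).finite_toSet.image (E n)).subset ?_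
    rintro V ⟨hV, hP⟩
    obtain ⟨n, m, hm, rfl⟩ := mem_iUnion.1 hV
    exact mem_biUnion ⟨m, hm, hP⟩ ⟨m, hm, rfl⟩

theorem isTauCover_iUnion_image_iff {E : ℕ → ℕ → Set T} {F : ℕ → Finset ℕ}
    (hdisj : Pairwise (Disjoint on fun n => E n '' F n)) :
    IsTauCover (⋃ n, E n '' F n) ↔ IsTauDiagonalizer E F := by
  simp only [IsTauCover, isLargeCover_iff, IsTauDiagonalizer, Set.Infinite,
    finite_setOf_mem_iUnion_image_iff hdisj, not_eventually, not_forall, not_not, exists_prop,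
    not_and]

theorem exists_isTauDiagonalizer_of_eventually_eq_univ {E : ℕ → ℕ → Set T}
    (h : ∀ᶠ n in atTop, ∃ M, E n M = univ) : ∃ F, IsTauDiagonalizer E F := by
  classical
  refine ⟨fun n => if hn : ∃ M, E n M = univ then {hn.choose} else ∅, fun x => ?_, fun x y => ?_⟩
  · refine (h.mono fun n hn => ⟨hn.choose, ?_, ?_⟩).frequently
    · simp [dif_pos hn]
    · simp [hn.choose_spec]
  · refine Or.inl (h.mono fun n hn m hm _ => ?_)
    obtain rfl : m = hn.choose := by simpa [dif_pos hn] using hm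
    simp [hn.choose_spec]

theorem eventually_of_eventually_comp {ρ : ℕ → ℕ} {Q : ℕ → Prop}
    (h : ∀ᶠ j in atTop, Q (ρ j)) (hQ : ∀ r ∉ range ρ, Q r) : ∀ᶠ r in atTop, Q r := by
  rw [← Nat.cofinite_eq_atTop, eventually_cofinite] at h ⊢
  refine (h.image ρ).subset fun r hr => ?_
  obtain ⟨j, rfl⟩ := not_not.1 (mt (hQ r) hr)
  exact mem_image_of_mem ρ hr

theorem IsTauDiagonalizer.exists_of_comp {E : ℕ → ℕ → Set T} {ρ : ℕ → ℕ} {G : ℕ → Finset ℕ}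
    (hG : IsTauDiagonalizer (fun j => E (ρ j)) G) (hρ : Injective ρ)
    (hfull : ∀ r ∉ range ρ, ∃ M, E r M = univ) : ∃ F, IsTauDiagonalizer E F := by
  classical
  let F r := if hr : r ∈ range ρ then G (invFun ρ r) else {(hfull r hr).choose}
  have hFρ : ∀ j, F (ρ j) = G j := fun j => by simp [F, leftInverse_invFun hρ j]
  have hFfull : ∀ r ∉ range ρ, ∀ m ∈ F r, E r m = univ := fun r hr m hm => by
    simp only [F, dif_neg hr, Finset.mem_singleton] at hm
    subst hm
    exact (hfull r hr).choose_spec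
  refine ⟨F, fun x => hρ.nat_tendsto_atTop.frequently (p := fun r => ∃ m ∈ F r, x ∈ E r m)
    (by simpa only [hFρ] using hG.1 x), fun x y => ?_⟩
  have hcomp : ∀ x y, (∀ᶠ j in atTop, ∀ m ∈ G j, x ∈ E (ρ j) m → y ∈ E (ρ j) m) →
      ∀ᶠ r in atTop, ∀ m ∈ F r, x ∈ E r m → y ∈ E r m := fun x y h =>
    eventually_of_eventually_comp (by simpa only [hFρ] using h)
      fun r hr m hm _ => hFfull r hr m hm ▸ mem_univ y
  exact (hG.2 x y).imp (hcomp x y) (hcomp y x)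

theorem ctblBorelGammaCover_range [TopologicalSpace T] {e : ℕ → Set T}
    (he : ∀ m, MeasurableSet[borel T] (e m)) (hγ : ∀ x, ∀ᶠ m in atTop, x ∈ e m)
    (hinf : (range e).Infinite) : CtblBorelGammaCover (range e) := by
  refine ⟨countable_range e, hinf, forall_mem_range.2 he, eq_univ_of_forall fun x => ?_,
    fun x => ?_⟩
  · obtain ⟨m, hm⟩ := (hγ x).exists
    exact ⟨e m, mem_range_self m, hm⟩
  · have hfin : {m | x ∉ e m}.Finite := by
      simpa only [← Nat.cofinite_eq_atTop, eventually_cofinite] using hγ x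
    refine (hfin.image e).subset ?_
    rintro _ ⟨⟨m, rfl⟩, hx⟩
    exact ⟨m, hx, rfl⟩

theorem SfinBGammaBTau.exists_isTauDiagonalizer [TopologicalSpace T] (hS : SfinBGammaBTau T)
    {E : ℕ → ℕ → Set T} (hE : ∀ n m, MeasurableSet[borel T] (E n m))
    (hγ : ∀ x n, ∀ᶠ m in atTop, x ∈ E n m) (hinf : ∀ n, (range (E n)).Infinite) :
    ∃ F, IsTauDiagonalizer E F := by
  obtain ⟨ℱ, hℱ, hτ⟩ :=
    hS (fun n => range (E n)) fun n => ctblBorelGammaCover_range (hE n) (hγ · n) (hinf n)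
  have hpieces : ∀ n, ∃ F : Finset ℕ, E n '' F = disjointed ℱ n := fun n =>
    exists_finset_image_eq_of_subset_range ((disjointed_subset ℱ n).trans (hℱ n).1)
      ((hℱ n).2.subset (disjointed_subset ℱ n))
  choose F hF using hpieces
  have hF' : (fun n => E n '' F n) = disjointed ℱ := funext hF
  refine ⟨F, (isTauCover_iUnion_image_iff (hF' ▸ disjoint_disjointed ℱ)).1 ?_⟩
  rwa [hF', iUnion_disjointed]

theorem SfinBGammaBTau.finitelyTauDiagonalizable_range [TopologicalSpace T]
    (hS : SfinBGammaBTau T) (Ψ : T → ℕ × ℕ → Bool)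
    (hΨ : @Measurable T (ℕ × ℕ → Bool) (borel T) (borel (ℕ × ℕ → Bool)) Ψ)
    (hγ : GammaFamily (range Ψ)) : FinitelyTauDiagonalizable (range Ψ) := by
  rw [finitelyTauDiagonalizable_range_iff]
  set E : ℕ → ℕ → Set T := fun n m => {x | Ψ x (n, m) = true}
  have hEγ : ∀ x n, ∀ᶠ m in atTop, x ∈ E n m := fun x => hγ _ (mem_range_self x)
  have hfull : ∀ n, ¬ (range (E n)).Infinite → ∃ M, E n M = univ := fun n h =>
    exists_eq_univ_of_finite_range (not_infinite.1 h) (hEγ · n)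
  obtain hR | hR := Set.finite_or_infinite {n | (range (E n)).Infinite}
  · exact exists_isTauDiagonalizer_of_eventually_eq_univ
      ((Nat.cofinite_eq_atTop ▸ hR.eventually_cofinite_notMem).mono hfull)
  · obtain ⟨G, hG⟩ := hS.exists_isTauDiagonalizer (E := fun j => E (Nat.nth _ j))
      (fun j m => measurable_pi_bool_iff.1 hΨ (_, m)) (fun x j => hEγ x _)
      (Nat.nth_mem_of_infinite hR)
    exact hG.exists_of_comp (Nat.nth_injective hR) fun r hr =>
      hfull r (by rwa [Nat.range_nth_of_infinite hR] at hr)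

theorem exists_isTauCover_of_infinite_inter {𝒰 : ℕ → Set (Set T)} {k : ℕ}
    (hγ : ∀ x, {U ∈ 𝒰 k | x ∉ U}.Finite) (hk : {n | (𝒰 n ∩ 𝒰 k).Infinite}.Infinite) :
    ∃ ℱ : ℕ → Set (Set T), (∀ n, ℱ n ⊆ 𝒰 n ∧ (ℱ n).Finite) ∧ IsTauCover (⋃ n, ℱ n) := by
  have hpiece : ∀ n, ∃ 𝒢 ⊆ 𝒰 n ∩ 𝒰 k, 𝒢.Finite ∧ ((𝒰 n ∩ 𝒰 k).Infinite → 𝒢.ncard = n) := by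
    intro n
    by_cases h : (𝒰 n ∩ 𝒰 k).Infinite
    · obtain ⟨𝒢, h𝒢, hfin, hcard⟩ := h.exists_subset_ncard_eq n
      exact ⟨𝒢, h𝒢, hfin, fun _ => hcard⟩
    · exact ⟨∅, empty_subset _, finite_empty, fun h' => absurd h' h⟩
  choose ℱ hℱ hfin hcard using hpiece
  refine ⟨ℱ, fun n => ⟨(hℱ n).trans inter_subset_left, hfin n⟩,
    isTauCover_of_infinite_of_finite_not_mem (fun hU => ?_) fun x => (hγ x).subset ?_⟩
  · obtain ⟨n, hn, hlt⟩ := hk.exists_gt (⋃ n, ℱ n).ncard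
    have hle := ncard_le_ncard (subset_iUnion ℱ n) hU
    rw [hcard n hn] at hle
    omega
  · rintro U ⟨hU, hxU⟩
    obtain ⟨n, hn⟩ := mem_iUnion.1 hU
    exact ⟨(hℱ n hn).2, hxU⟩

theorem exists_isTauCover_iUnion_image [TopologicalSpace T]
    (H : ∀ Ψ : T → (ℕ × ℕ → Bool),
      @Measurable T (ℕ × ℕ → Bool) (borel T) (borel (ℕ × ℕ → Bool)) Ψ →
      GammaFamily (range Ψ) → FinitelyTauDiagonalizable (range Ψ))
    {E : ℕ → ℕ → Set T} (hE : ∀ n m, MeasurableSet[borel T] (E n m))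
    (hγ : ∀ x n, ∀ᶠ m in atTop, x ∈ E n m) (hdisj : Pairwise (Disjoint on fun n => range (E n))) :
    ∃ F : ℕ → Finset ℕ, IsTauCover (⋃ n, E n '' F n) := by
  classical
  let Ψ : T → ℕ × ℕ → Bool := fun x p => decide (x ∈ E p.1 p.2)
  have hΨ : (fun n m => {x | Ψ x (n, m) = true}) = E := by
    ext
    simp [Ψ]
  obtain ⟨F, hF⟩ := (finitelyTauDiagonalizable_range_iff Ψ).1 <| H Ψ
    (measurable_pi_bool_iff.2 fun p => by simpa [Ψ] using hE p.1 p.2)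
    (by simpa [GammaFamily, GammaArray, Ψ] using hγ)
  refine ⟨F, (isTauCover_iUnion_image_iff fun n n' hnn' => ?_).2 (hΨ ▸ hF)⟩
  exact (hdisj hnn').mono (image_subset_range _ _) (image_subset_range _ _)

theorem sfinBGammaBTau_of_forall_finitelyTauDiagonalizable [TopologicalSpace T]
    (H : ∀ Ψ : T → (ℕ × ℕ → Bool),
      @Measurable T (ℕ × ℕ → Bool) (borel T) (borel (ℕ × ℕ → Bool)) Ψ →
      GammaFamily (range Ψ) → FinitelyTauDiagonalizable (range Ψ)) :
    SfinBGammaBTau T := by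
  intro 𝒰 h𝒰
  by_cases hk : ∃ k, {n | (𝒰 n ∩ 𝒰 k).Infinite}.Infinite
  · obtain ⟨k, hk⟩ := hk
    exact exists_isTauCover_of_infinite_inter (h𝒰 k).2.2.2.2 hk
  simp only [not_exists, not_infinite] at hk
  obtain ⟨i, hi, hinter⟩ := exists_injective_seq_inter_finite (fun n => (h𝒰 n).2.1)
    fun k => Nat.cofinite_eq_atTop ▸ eventually_cofinite.2 (hk k)
  have hW : ∀ k, (disjointed (𝒰 ∘ i) k).Infinite := fun k =>
    infinite_disjointed_of_inter_finite (h𝒰 (i k)).2.1 fun j hj => hinter j k hj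
  have hW𝒰 : ∀ k, disjointed (𝒰 ∘ i) k ⊆ 𝒰 (i k) := disjointed_subset _
  let e k : ℕ ↪ ↥(disjointed (𝒰 ∘ i) k) := (hW k).natEmbedding
  have he : ∀ k, range (fun m => (e k m : Set T)) ⊆ disjointed (𝒰 ∘ i) k := fun k =>
    range_subset_iff.2 fun m => (e k m).2
  obtain ⟨F, hF⟩ := exists_isTauCover_iUnion_image H (E := fun k m => e k m)
    (fun k m => (h𝒰 (i k)).2.2.1 _ (hW𝒰 k (e k m).2))
    (fun x k => eventually_mem_of_injective (Subtype.val_injective.comp (e k).injective)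
      ((he k).trans (hW𝒰 k)) ((h𝒰 (i k)).2.2.2.2 x))
    fun j k hjk => (disjoint_disjointed _ hjk).mono (he j) (he k)
  obtain ⟨ℱ, hℱ, hunion⟩ := exists_subset_iUnion_eq_of_injective hi
    (𝒢 := fun k => (fun m => (e k m : Set T)) '' F k) fun k =>
      ⟨image_subset_iff.2 fun m _ => hW𝒰 k (e k m).2, (F k).finite_toSet.image _⟩
  exact ⟨ℱ, hℱ, hunion ▸ hF⟩

end

/-- Mildenberger–Shelah et al.: a set of reals satisfies `Sfin(B_Γ,B_Τ)` iff every Borel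
image of it in `{0,1}^{ℕ×ℕ}` which is a `γ`-family is finitely `τ`-diagonalizable. -/
theorem sfinBGammaBTau_characterization (X : Set ℝ) :
    SfinBGammaBTau X ↔
      ∀ Ψ : X → (ℕ × ℕ → Bool),
        @Measurable X (ℕ × ℕ → Bool) (borel X) (borel (ℕ × ℕ → Bool)) Ψ →
        GammaFamily (Set.range Ψ) → FinitelyTauDiagonalizable (Set.range Ψ) :=
  ⟨SfinBGammaBTau.finitelyTauDiagonalizable_range,
    sfinBGammaBTau_of_forall_finitelyTauDiagonalizable⟩
end

section
/- The minimal cardinality of a set X ⊆ ℝ that does not satisfy Sfin(Γ,Τ) is exactly 𝔟; that is, non(Sfin(Γ,Τ)) = 𝔟. -/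
open Filter Set

/-- An open `γ`-cover. -/
def IsOpenGammaCover {X : Type*} [TopologicalSpace X] (𝒰 : Set (Set X)) : Prop :=
  (∀ U ∈ 𝒰, IsOpen U) ∧ IsGammaCover 𝒰

/-- The property `Sfin(Γ,Τ)`. -/
def SfinGammaTau (X : Type*) [TopologicalSpace X] : Prop :=
  ∀ 𝒰 : ℕ → Set (Set X), (∀ n, IsOpenGammaCover (𝒰 n)) →
    ∃ ℱ : ℕ → Set (Set X), (∀ n, ℱ n ⊆ 𝒰 n ∧ (ℱ n).Finite) ∧
      IsTauCover (⋃ n, ℱ n)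

set_option linter.dupNamespace false

namespace NonSfinAux


noncomputable def dig (z : ℕ → Bool) (m : ℕ) : ℝ := if z m then 2 * (3⁻¹:ℝ)^(m+1) else 0

lemma geo_summable : Summable (fun m : ℕ => 2 * (3⁻¹:ℝ)^(m+1)) := by
  have h : Summable (fun m : ℕ => (3⁻¹:ℝ)^m) :=
    summable_geometric_of_lt_one (by norm_num) (by norm_num)
  have h2 := (h.mul_left (2 * 3⁻¹))
  apply h2.congr
  intro m
  rw [pow_succ]
  ring

lemma dig_nonneg (z : ℕ → Bool) (m : ℕ) : 0 ≤ dig z m := by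
  unfold dig; split <;> positivity

lemma dig_le (z : ℕ → Bool) (m : ℕ) : dig z m ≤ 2 * (3⁻¹:ℝ)^(m+1) := by
  unfold dig; split
  · exact le_refl _
  · positivity

lemma dig_summable (z : ℕ → Bool) : Summable (dig z) :=
  Summable.of_nonneg_of_le (dig_nonneg z) (dig_le z) geo_summable

noncomputable def rC (z : ℕ → Bool) : ℝ := ∑' m, dig z m

lemma tail_sum (k : ℕ) : ∑' i, 2 * (3⁻¹:ℝ)^(i + k + 1) = (3⁻¹:ℝ)^k := by
  have h : ∀ i : ℕ, 2 * (3⁻¹:ℝ)^(i + k + 1) = (2 * (3⁻¹:ℝ)^(k+1)) * (3⁻¹:ℝ)^i := by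
    intro i; ring
  rw [tsum_congr h, tsum_mul_left, tsum_geometric_of_lt_one (by norm_num) (by norm_num)]
  rw [pow_succ]
  norm_num
  ring





lemma rC_sub_ge (z z' : ℕ → Bool) (d : ℕ) (hlt : ∀ i < d, z i = z' i)
    (hz : z d = true) (hz' : z' d = false) : (3⁻¹:ℝ)^(d+1) ≤ rC z - rC z' := by
  classical
  set c : ℕ → ℝ := fun m => dig z m - dig z' m with hc_def
  have hc : Summable c := (dig_summable z).sub (dig_summable z')
  have hrr : rC z - rC z' = ∑' m, c m := (Summable.tsum_sub (dig_summable z) (dig_summable z')).symm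
  have hsplit := Summable.sum_add_tsum_nat_add (f := c) (d+1) hc
  have hhead : ∑ i ∈ Finset.range (d+1), c i = 2 * (3⁻¹:ℝ)^(d+1) := by
    rw [Finset.sum_eq_single_of_mem d (Finset.self_mem_range_succ d)]
    · simp only [hc_def, dig, hz, hz']
      norm_num
    · intro i hi hne
      have : i < d := lt_of_le_of_ne (Nat.lt_succ_iff.mp (Finset.mem_range.mp hi)) hne
      simp only [hc_def, dig, hlt i this, sub_self]
  have hgeo_shift : Summable (fun i : ℕ => 2 * (3⁻¹:ℝ)^(i + (d+1) + 1)) := by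
    exact (summable_nat_add_iff (f := fun m : ℕ => 2 * (3⁻¹:ℝ)^(m+1)) (d+1)).2 geo_summable
  have htail : -((3⁻¹:ℝ)^(d+1)) ≤ ∑' i, c (i + (d+1)) := by
    have hle : ∀ i : ℕ, -(2 * (3⁻¹:ℝ)^(i + (d+1) + 1)) ≤ c (i + (d+1)) := by
      intro i
      have h1 : dig z' (i + (d+1)) ≤ 2 * (3⁻¹:ℝ)^(i + (d+1) + 1) := dig_le z' _
      have h2 : 0 ≤ dig z (i + (d+1)) := dig_nonneg z _
      simp only [hc_def]
      linarith
    have := Summable.tsum_le_tsum hle hgeo_shift.neg ((summable_nat_add_iff (d+1)).2 hc)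
    calc -((3⁻¹:ℝ)^(d+1)) = ∑' i : ℕ, -(2 * (3⁻¹:ℝ)^(i + (d+1) + 1)) := by
            rw [tsum_neg, tail_sum (d+1)]
      _ ≤ _ := this
  have : (3⁻¹:ℝ)^(d+1) ≤ ∑' m, c m := by
    rw [← hsplit, hhead]
    linarith
  linarith [hrr ▸ this]

lemma rC_apart (z z' : ℕ → Bool) (m : ℕ) (h : z m ≠ z' m) :
    (3⁻¹:ℝ)^(m+1) ≤ |rC z - rC z'| := by
  classical
  have hex : ∃ i, z i ≠ z' i := ⟨m, h⟩
  set d := Nat.find hex with hd_def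
  have hd : z d ≠ z' d := Nat.find_spec hex
  have hdm : d ≤ m := Nat.find_le h
  have hmin : ∀ i < d, z i = z' i := by
    intro i hi
    by_contra hne
    exact absurd (Nat.find_min hex hi) (by simp [hne])
  have hkey : (3⁻¹:ℝ)^(d+1) ≤ |rC z - rC z'| := by
    cases hzz : z d with
    | true =>
      have hz' : z' d = false := by
        cases hzz' : z' d with
        | true => exact absurd (hzz.trans hzz'.symm) hd
        | false => rfl
      exact le_trans (rC_sub_ge z z' d hmin hzz hz') (le_abs_self _)
    | false =>
      have hz' : z' d = true := by
        cases hzz' : z' d with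
        | true => rfl
        | false => exact absurd (hzz.trans hzz'.symm) hd
      have := rC_sub_ge z' z d (fun i hi => (hmin i hi).symm) hz' hzz
      rw [abs_sub_comm]
      exact le_trans this (le_abs_self _)
  refine le_trans ?_ hkey
  exact pow_le_pow_of_le_one (by norm_num) (by norm_num) (by omega)

lemma rC_inj : Function.Injective rC := by
  intro z z' h
  by_contra hne
  obtain ⟨m, hm⟩ := Function.ne_iff.mp hne
  have := rC_apart z z' m hm
  rw [h, sub_self, abs_zero] at this
  have : (0:ℝ) < (3⁻¹:ℝ)^(m+1) := by positivity
  linarith [rC_apart z z' m hm, (by rw [h, sub_self, abs_zero] : |rC z - rC z'| = 0)]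



def hat (f : ℕ → ℕ) : ℕ → ℕ := fun n => (Finset.range (n+1)).sup f

lemma hat_mono (f : ℕ → ℕ) : Monotone (hat f) := fun a b hab =>
  Finset.sup_mono (Finset.range_subset_range.mpr (by omega))

lemma le_hat (f : ℕ → ℕ) (n : ℕ) : f n ≤ hat f n :=
  Finset.le_sup (Finset.mem_range.mpr (by omega))

variable (B₀ : Set (ℕ → ℕ))

abbrev TT := (↥B₀ ⊕ ↥B₀ × ↥B₀) ⊕ ℕ

def cbit : TT B₀ → ℕ → ℕ → Bool
  | .inl (.inl a) => fun n k => decide (hat ↑a n ≤ k)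
  | .inl (.inr p) => fun n k => decide (hat (↑p.1) n ≤ k ∨ k < hat (↑p.2) n)
  | .inr i => fun n k => decide (Nat.pair n k ≠ i)

@[simp] lemma cbit_plain (a : ↥B₀) (n k : ℕ) :
    cbit B₀ (.inl (.inl a)) n k = decide (hat ↑a n ≤ k) := rfl
@[simp] lemma cbit_pairt (p : ↥B₀ × ↥B₀) (n k : ℕ) :
    cbit B₀ (.inl (.inr p)) n k = decide (hat (↑p.1) n ≤ k ∨ k < hat (↑p.2) n) := rfl
@[simp] lemma cbit_pad (i n k : ℕ) :
    cbit B₀ (.inr i) n k = decide (Nat.pair n k ≠ i) := rfl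

def codeF (t : TT B₀) : ℕ → Bool := fun m => cbit B₀ t (Nat.unpair m).1 (Nat.unpair m).2

lemma code_pair (t : TT B₀) (n k : ℕ) : codeF B₀ t (Nat.pair n k) = cbit B₀ t n k := by
  unfold codeF
  rw [Nat.unpair_pair]

noncomputable def XX : Set ℝ := Set.range (fun t : TT B₀ => rC (codeF B₀ t))

noncomputable def pt (t : TT B₀) : ↥(XX B₀) := ⟨rC (codeF B₀ t), ⟨t, rfl⟩⟩

def W (n k : ℕ) : Set ↥(XX B₀) :=
  {x | ∃ t, (x : ℝ) = rC (codeF B₀ t) ∧ cbit B₀ t n k = true}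

lemma mem_W_iff {t : TT B₀} {n k : ℕ} : pt B₀ t ∈ W B₀ n k ↔ cbit B₀ t n k = true := by
  constructor
  · rintro ⟨t', ht', hb⟩
    have hcode : codeF B₀ t = codeF B₀ t' := rC_inj ht'
    rw [← code_pair, hcode, code_pair]
    exact hb
  · intro hb
    exact ⟨t, rfl, hb⟩

lemma mem_W_iff' {x : ↥(XX B₀)} {t : TT B₀} (hx : (x:ℝ) = rC (codeF B₀ t)) {n k : ℕ} :
    x ∈ W B₀ n k ↔ cbit B₀ t n k = true := by
  have hxe : x = pt B₀ t := Subtype.ext hx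
  rw [hxe]; exact mem_W_iff B₀

lemma isOpen_W (n k : ℕ) : IsOpen (W B₀ n k) := by
  have hrw : W B₀ n k = Subtype.val ⁻¹' (⋃ (t : TT B₀) (_ : cbit B₀ t n k = true),
      Metric.ball (rC (codeF B₀ t)) ((3⁻¹:ℝ)^(Nat.pair n k + 1))) := by
    ext x
    constructor
    · rintro ⟨t, ht, hb⟩
      refine Set.mem_preimage.mpr (Set.mem_iUnion.mpr ⟨t, Set.mem_iUnion.mpr ⟨hb, ?_⟩⟩)
      rw [Metric.mem_ball, Real.dist_eq, ht, sub_self, abs_zero]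
      positivity
    · intro hx
      obtain ⟨t0, h1⟩ := Set.mem_iUnion.mp (Set.mem_preimage.mp hx)
      obtain ⟨hb0, hball⟩ := Set.mem_iUnion.mp h1
      obtain ⟨t1, ht1⟩ := x.2
      refine ⟨t1, ht1.symm, ?_⟩
      by_contra hne
      have hdiff : codeF B₀ t1 (Nat.pair n k) ≠ codeF B₀ t0 (Nat.pair n k) := by
        rw [code_pair, code_pair]
        intro hc
        exact hne (hc.trans hb0)
      have hap := rC_apart (codeF B₀ t1) (codeF B₀ t0) (Nat.pair n k) hdiff
      rw [Metric.mem_ball, Real.dist_eq, ← ht1] at hball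
      linarith
  rw [hrw]
  exact (isOpen_iUnion (fun t => isOpen_iUnion (fun _ => Metric.isOpen_ball))).preimage
    continuous_subtype_val

lemma finite_exc (t : TT B₀) (n : ℕ) : {k | ¬ cbit B₀ t n k = true}.Finite := by
  match t with
  | .inl (.inl a) =>
    refine (Set.finite_Iio (hat (↑a) n)).subset ?_
    intro k hk
    simp only [mem_setOf_eq, cbit_plain, decide_eq_true_iff, not_le] at hk
    exact hk
  | .inl (.inr p) =>
    refine (Set.finite_Iio (hat (↑p.1) n)).subset ?_
    intro k hk
    simp only [mem_setOf_eq, cbit_pairt, decide_eq_true_iff, not_or, not_le, not_lt] at hk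
    exact hk.1
  | .inr i =>
    refine (Set.finite_singleton ((Nat.unpair i).2)).subset ?_
    intro k hk
    simp only [mem_setOf_eq, cbit_pad, decide_eq_true_iff, not_not] at hk
    simp [← hk, Nat.unpair_pair]

lemma W_inj : Function.Injective (fun p : ℕ × ℕ => W B₀ p.1 p.2) := by
  intro p q h
  by_contra hne
  have h1 : pt B₀ (.inr (Nat.pair p.1 p.2)) ∉ W B₀ p.1 p.2 := by
    rw [mem_W_iff]
    simp
  have h2 : pt B₀ (.inr (Nat.pair p.1 p.2)) ∈ W B₀ q.1 q.2 := by
    rw [mem_W_iff]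
    simp only [cbit_pad, decide_eq_true_iff]
    intro hc
    obtain ⟨h1', h2'⟩ := Nat.pair_eq_pair.mp hc
    exact hne (Prod.ext h1' h2').symm
  simp only at h
  rw [h] at h1
  exact h1 h2

lemma W_inj_k (n : ℕ) : Function.Injective (fun k => W B₀ n k) := by
  intro a b hab
  have h2 : (fun p : ℕ × ℕ => W B₀ p.1 p.2) (n, a) = (fun p : ℕ × ℕ => W B₀ p.1 p.2) (n, b) := hab
  have := W_inj B₀ h2
  exact (Prod.ext_iff.mp this).2

def IsOpenGammaCover' {X : Type*} [TopologicalSpace X] (𝒰 : Set (Set X)) : Prop :=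
  (∀ U ∈ 𝒰, IsOpen U) ∧ (𝒰.Infinite ∧ ⋃₀ 𝒰 = Set.univ ∧ ∀ x : X, {U ∈ 𝒰 | x ∉ U}.Finite)

lemma gammaCover (n : ℕ) : IsOpenGammaCover' (Set.range (fun k => W B₀ n k)) := by
  refine ⟨?_, ?_, ?_, ?_⟩
  · rintro U ⟨k, rfl⟩
    exact isOpen_W B₀ n k
  · exact infinite_range_of_injective (W_inj_k B₀ n)
  · ext x
    simp only [Set.mem_univ, iff_true, Set.mem_sUnion]
    obtain ⟨t, ht⟩ := x.2
    obtain ⟨k, hk⟩ := ((finite_exc B₀ t n).infinite_compl).nonempty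
    simp only [mem_compl_iff, mem_setOf_eq, not_not] at hk
    exact ⟨W B₀ n k, ⟨k, rfl⟩, (mem_W_iff' B₀ ht.symm).mpr hk⟩
  · intro x
    obtain ⟨t, ht⟩ := x.2
    refine ((finite_exc B₀ t n).image (fun k => W B₀ n k)).subset ?_
    rintro U ⟨⟨k, rfl⟩, hxU⟩
    exact ⟨k, fun hb => hxU ((mem_W_iff' B₀ ht.symm).mpr hb), rfl⟩



lemma proj_infinite {P : Set (ℕ × ℕ)} (hP : P.Infinite)
    (hcol : ∀ n, {k | (n,k) ∈ P}.Finite) : {n | ∃ k, (n,k) ∈ P}.Infinite := by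
  intro hfin
  apply hP
  have hsub : P ⊆ ⋃ n ∈ {n | ∃ k, (n,k) ∈ P}, (fun k => (n,k)) '' {k | (n,k) ∈ P} := by
    rintro ⟨n, k⟩ hp
    exact Set.mem_biUnion ⟨k, hp⟩ ⟨k, hp, rfl⟩
  exact (hfin.biUnion (fun n _ => (hcol n).image _)).subset hsub

lemma DOM (B₀ : Set (ℕ → ℕ)) (hB : ¬ BddFam B₀) (D : Set ℕ) (hD : D.Infinite) (m : ℕ → ℕ)
    (hm : ∀ f ∈ B₀, {n | n ∈ D ∧ m n < hat f n}.Finite) : False := by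
  apply hB
  have hnxt : ∀ j : ℕ, ∃ n, n ∈ D ∧ j < n := by
    intro j
    obtain ⟨n, hn, hlt⟩ := hD.exists_gt j
    exact ⟨n, hn, hlt⟩
  choose nxt hnxtD hnxtlt using hnxt
  refine ⟨fun j => m (nxt j), fun f hf => ?_⟩
  obtain ⟨N, hN⟩ : ∃ N, ∀ n, n ∈ D → N ≤ n → hat f n ≤ m n := by
    obtain ⟨N, hN⟩ := (hm f hf).bddAbove
    refine ⟨N + 1, fun n hn hle => ?_⟩
    by_contra hlt
    push_neg at hlt
    have : n ≤ N := hN ⟨hn, hlt⟩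
    omega
  rw [LeStar, Filter.eventually_atTop]
  refine ⟨N, fun j hj => ?_⟩
  calc f j ≤ hat f j := le_hat f j
    _ ≤ hat f (nxt j) := hat_mono f (le_of_lt (hnxtlt j))
    _ ≤ m (nxt j) := hN _ (hnxtD j) (le_trans hj (le_of_lt (hnxtlt j)))





lemma bddFam_of_lt_b (B : Set (ℕ → ℕ)) (h : Cardinal.mk B < bCard) : BddFam B := by
  by_contra h'
  exact absurd (csInf_le (OrderBot.bddBelow _)
    (show Cardinal.mk ↥B ∈ { c : Cardinal | ∃ B : Set (ℕ → ℕ), ¬ BddFam B ∧ Cardinal.mk B = c }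
      from ⟨B, h', rfl⟩)) (not_le.2 h)

lemma sfin_of_lt_b {α : Type} [TopologicalSpace α] (h : Cardinal.mk α < bCard) :
    SfinGammaTau α := by
  intro 𝒰 h𝒰
  have hinf : ∀ n, (𝒰 n).Infinite := fun n => (h𝒰 n).2.1
  let u : ∀ n, ℕ ↪ ↥(𝒰 n) := fun n => (hinf n).natEmbedding
  let V : ℕ → ℕ → Set α := fun n k => ((u n) k : Set α)
  have hVmem : ∀ n k, V n k ∈ 𝒰 n := fun n k => ((u n) k).2
  have hVinj : ∀ n, Function.Injective (V n) := by
    intro n a b hab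
    exact (u n).injective (Subtype.ext hab)
  have hexc : ∀ (x : α) n, {k | x ∉ V n k}.Finite := by
    intro x n
    have hfin := (h𝒰 n).2.2.2 x
    have hsub : {k | x ∉ V n k} ⊆ (fun k => V n k) ⁻¹' {U | U ∈ 𝒰 n ∧ x ∉ U} := by
      intro k hk; exact ⟨hVmem n k, hk⟩
    exact (hfin.preimage ((hVinj n).injOn)).subset hsub
  let fx : α → ℕ → ℕ := fun x n => sSup {k | x ∉ V n k} + 1
  have hfx : ∀ x n k, fx x n ≤ k → x ∈ V n k := by
    intro x n k hk
    by_contra hx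
    have h1 : k ≤ sSup {k | x ∉ V n k} := le_csSup ((hexc x n).bddAbove) hx
    simp only [fx] at hk
    omega
  have hBdd : BddFam (Set.range fx) := bddFam_of_lt_b _ (lt_of_le_of_lt Cardinal.mk_range_le h)
  obtain ⟨g, hg⟩ := hBdd
  refine ⟨fun n => (fun k => V n k) '' (Set.Icc (g n) (g n + n)), fun n => ⟨?_, ?_⟩, ?_⟩
  · rintro U ⟨k, _, rfl⟩; exact hVmem n k
  · exact (Set.finite_Icc _ _).image _
  set S := ⋃ n, (fun k => V n k) '' (Set.Icc (g n) (g n + n)) with hS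
  have hexcS : ∀ x : α, {U | U ∈ S ∧ x ∉ U}.Finite := by
    intro x
    obtain ⟨N, hN⟩ := Filter.eventually_atTop.mp (hg (fx x) ⟨x, rfl⟩)
    have hsub : {U | U ∈ S ∧ x ∉ U} ⊆
        ⋃ n ∈ Finset.range N, (fun k => V n k) '' (Set.Icc (g n) (g n + n)) := by
      rintro U ⟨hU, hxU⟩
      obtain ⟨n, hn⟩ := Set.mem_iUnion.mp hU
      obtain ⟨k, hk, rfl⟩ := hn
      have hnN : n < N := by
        by_contra hge
        push_neg at hge
        exact hxU (hfx x n k (le_trans (hN n hge) hk.1))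
      exact Set.mem_biUnion (Finset.mem_range.mpr hnN) ⟨k, hk, rfl⟩
    exact (Set.Finite.biUnion (Finset.range N).finite_toSet
      (fun n _ => (Set.finite_Icc _ _).image _)).subset hsub
  have hSinf : S.Infinite := by
    intro hfin
    have hcard : ∀ n : ℕ, n + 1 ≤ S.ncard := by
      intro n
      have h1 : ((fun k => V n k) '' (Set.Icc (g n) (g n + n))).ncard = n + 1 := by
        rw [Set.ncard_image_of_injective _ (hVinj n), ← Finset.coe_Icc,
          Set.ncard_coe_finset, Nat.card_Icc]
        omega
      rw [← h1]
      exact Set.ncard_le_ncard (Set.subset_iUnion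
        (fun n => (fun k => V n k) '' (Set.Icc (g n) (g n + n))) n) hfin
    have := hcard S.ncard
    omega
  have hlarge : ∀ x : α, {U | U ∈ S ∧ x ∈ U}.Infinite := by
    intro x
    refine ((hSinf.diff (hexcS x)).mono ?_)
    rintro U ⟨hU, hU2⟩
    refine ⟨hU, ?_⟩
    by_contra hx
    exact hU2 ⟨hU, hx⟩
  refine ⟨⟨?_, hlarge⟩, ?_⟩
  · ext x
    simp only [Set.mem_univ, iff_true]
    obtain ⟨U, hU⟩ := (hlarge x).nonempty
    exact ⟨U, hU.1, hU.2⟩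
  · intro x y
    left
    exact (hexcS y).subset (fun U hU => ⟨hU.1, hU.2.2⟩)




section Main
variable (B₀ : Set (ℕ → ℕ))

theorem not_sfin (hB : ¬ BddFam B₀) : ¬ SfinGammaTau ↥(XX B₀) := by
  intro h
  obtain ⟨ℱ, hℱ, hτ⟩ := h (fun n => Set.range (fun k => W B₀ n k)) (fun n =>
    gammaCover B₀ n)
  set S := ⋃ n, ℱ n with hS
  set SP : Set (ℕ × ℕ) := {p | W B₀ p.1 p.2 ∈ ℱ p.1} with hSPdef
  have hmemS : ∀ U, U ∈ S ↔ ∃ p ∈ SP, U = W B₀ p.1 p.2 := by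
    intro U
    constructor
    · intro hU
      obtain ⟨n, hn⟩ := Set.mem_iUnion.mp hU
      obtain ⟨k, rfl⟩ := (hℱ n).1 hn
      exact ⟨(n, k), hn, rfl⟩
    · rintro ⟨p, hp, rfl⟩
      exact Set.mem_iUnion.mpr ⟨p.1, hp⟩
  have hcol : ∀ n, {k | (n,k) ∈ SP}.Finite := by
    intro n
    have heq : {k | (n,k) ∈ SP} = (fun k => W B₀ n k) ⁻¹' (ℱ n) := rfl
    rw [heq]
    exact (hℱ n).2.preimage ((W_inj_k B₀ n).injOn)
  have hsel : ∀ t : TT B₀, {U | U ∈ S ∧ pt B₀ t ∈ U} =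
      (fun p : ℕ × ℕ => W B₀ p.1 p.2) '' {p | p ∈ SP ∧ cbit B₀ t p.1 p.2 = true} := by
    intro t
    ext U
    constructor
    · rintro ⟨hU, hmem⟩
      obtain ⟨p, hp, rfl⟩ := (hmemS U).mp hU
      exact ⟨p, ⟨hp, (mem_W_iff B₀).mp hmem⟩, rfl⟩
    · rintro ⟨p, ⟨hp, hb⟩, rfl⟩
      exact ⟨(hmemS _).mpr ⟨p, hp, rfl⟩, (mem_W_iff B₀).mpr hb⟩
  have hsep : ∀ t t' : TT B₀, {U | U ∈ S ∧ pt B₀ t ∈ U ∧ pt B₀ t' ∉ U} =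
      (fun p : ℕ × ℕ => W B₀ p.1 p.2) ''
        {p | p ∈ SP ∧ cbit B₀ t p.1 p.2 = true ∧ ¬ cbit B₀ t' p.1 p.2 = true} := by
    intro t t'
    ext U
    constructor
    · rintro ⟨hU, hmem, hnmem⟩
      obtain ⟨p, hp, rfl⟩ := (hmemS U).mp hU
      exact ⟨p, ⟨hp, (mem_W_iff B₀).mp hmem, fun hb => hnmem ((mem_W_iff B₀).mpr hb)⟩, rfl⟩
    · rintro ⟨p, ⟨hp, hb, hnb⟩, rfl⟩
      exact ⟨(hmemS _).mpr ⟨p, hp, rfl⟩, (mem_W_iff B₀).mpr hb,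
        fun hmem => hnb ((mem_W_iff B₀).mp hmem)⟩
  have hlargeP : ∀ t : TT B₀, {p | p ∈ SP ∧ cbit B₀ t p.1 p.2 = true}.Infinite := by
    intro t hfin
    have hinf := hτ.1.2 (pt B₀ t)
    apply hinf
    have hfin2 : {U | U ∈ S ∧ pt B₀ t ∈ U}.Finite := by
      rw [hsel t]
      exact hfin.image _
    exact hfin2
  have htauP : ∀ t t' : TT B₀,
      {p | p ∈ SP ∧ cbit B₀ t p.1 p.2 = true ∧ ¬ cbit B₀ t' p.1 p.2 = true}.Finite ∨
      {p | p ∈ SP ∧ cbit B₀ t' p.1 p.2 = true ∧ ¬ cbit B₀ t p.1 p.2 = true}.Finite := by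
    intro t t'
    rcases hτ.2 (pt B₀ t) (pt B₀ t') with hfin | hfin
    · left
      refine Set.Finite.of_finite_image ?_ ((W_inj B₀).injOn)
      rw [← hsep t t']
      exact hfin
    · right
      refine Set.Finite.of_finite_image ?_ ((W_inj B₀).injOn)
      rw [← hsep t' t]
      exact hfin
  have claim1 : ∀ b : ↥B₀, {p | p ∈ SP ∧ p.2 < hat (↑b) p.1}.Finite := by
    intro b
    by_contra hinf
    have hMa : ∀ a : ↥B₀,
        {p | p ∈ SP ∧ hat (↑b) p.1 ≤ p.2 ∧ p.2 < hat (↑a) p.1}.Finite := by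
      intro a
      rcases htauP (.inl (.inr (a, b))) (.inl (.inl b)) with hfin | hfin
      · exfalso
        apply hinf
        refine hfin.subset ?_
        rintro p ⟨hp, hlt⟩
        refine ⟨hp, ?_, ?_⟩
        · simp only [cbit_pairt, decide_eq_true_iff]
          exact Or.inr hlt
        · simp only [cbit_plain, decide_eq_true_iff, not_le]
          exact hlt
      · refine hfin.subset ?_
        rintro p ⟨hp, hge, hlt⟩
        refine ⟨hp, ?_, ?_⟩
        · simp only [cbit_plain, decide_eq_true_iff]
          exact hge
        · simp only [cbit_pairt, decide_eq_true_iff, not_or, not_le, not_lt]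
          exact ⟨hlt, hge⟩
    have hHi : {p | p ∈ SP ∧ hat (↑b) p.1 ≤ p.2}.Infinite := by
      have h1 := hlargeP (.inl (.inl b))
      refine h1.mono ?_
      rintro p ⟨hp, hb'⟩
      simp only [cbit_plain, decide_eq_true_iff] at hb'
      exact ⟨hp, hb'⟩
    have hcolHi : ∀ n, {k | (n,k) ∈ {p : ℕ × ℕ | p ∈ SP ∧ hat (↑b) p.1 ≤ p.2}}.Finite :=
      fun n => (hcol n).subset (fun k hk => hk.1)
    have hD := proj_infinite hHi hcolHi
    set m : ℕ → ℕ := fun n => sInf {k | (n,k) ∈ {p : ℕ × ℕ | p ∈ SP ∧ hat (↑b) p.1 ≤ p.2}}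
      with hm_def
    refine DOM B₀ hB _ hD m ?_
    intro f hf
    have hsub : {n | n ∈ {n | ∃ k, (n,k) ∈ {p : ℕ × ℕ | p ∈ SP ∧ hat (↑b) p.1 ≤ p.2}} ∧
        m n < hat f n} ⊆
        (fun n => (n, m n)) ⁻¹'
          {p : ℕ × ℕ | p ∈ SP ∧ hat (↑b) p.1 ≤ p.2 ∧ p.2 < hat f p.1} := by
      rintro n ⟨hn, hlt⟩
      have hmem : (n, m n) ∈ {p : ℕ × ℕ | p ∈ SP ∧ hat (↑b) p.1 ≤ p.2} := Nat.sInf_mem hn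
      exact ⟨hmem.1, hmem.2, hlt⟩
    refine ((hMa ⟨f, hf⟩).preimage ?_).subset hsub
    intro a _ c _ hac
    exact congrArg Prod.fst hac
  have hSPinf : SP.Infinite := by
    have h1 := hlargeP (.inr 0)
    exact h1.mono (fun p hp => hp.1)
  have hD0 := proj_infinite hSPinf hcol
  set m0 : ℕ → ℕ := fun n => sInf {k | (n,k) ∈ SP} with hm0_def
  refine DOM B₀ hB _ hD0 m0 ?_
  intro f hf
  have hsub : {n | n ∈ {n | ∃ k, (n,k) ∈ SP} ∧ m0 n < hat f n} ⊆
      (fun n => (n, m0 n)) ⁻¹' {p : ℕ × ℕ | p ∈ SP ∧ p.2 < hat f p.1} := by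
    rintro n ⟨hn, hlt⟩
    exact ⟨Nat.sInf_mem hn, hlt⟩
  refine ((claim1 ⟨f, hf⟩).preimage ?_).subset hsub
  intro a _ c _ hac
  exact congrArg Prod.fst hac

end Main

lemma not_bdd_univ : ¬ BddFam (Set.univ : Set (ℕ → ℕ)) := by
  rintro ⟨g, hg⟩
  obtain ⟨n, hn⟩ := (hg (fun n => g n + 1) (Set.mem_univ _)).exists
  simp only [] at hn
  omega

lemma b_mem : bCard ∈ { c : Cardinal | ∃ B : Set (ℕ → ℕ), ¬ BddFam B ∧ Cardinal.mk B = c } :=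
  csInf_mem ⟨_, ⟨Set.univ, not_bdd_univ, rfl⟩⟩

lemma aleph0_le_b : Cardinal.aleph0 ≤ bCard := by
  obtain ⟨B, hB, hmk⟩ := b_mem
  rw [← hmk]
  by_contra hlt
  push_neg at hlt
  have hfin : B.Finite := Cardinal.lt_aleph0_iff_set_finite.mp hlt
  apply hB
  classical
  refine ⟨fun n => hfin.toFinset.sup (fun f => f n), fun f hf => ?_⟩
  exact Filter.Eventually.of_forall (fun n =>
    Finset.le_sup (f := fun f => f n) (hfin.mem_toFinset.mpr hf))

end NonSfinAux

/-- Mildenberger–Shelah et al.: `non(Sfin(Γ,Τ)) = 𝔟`. -/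
theorem non_sfinGammaTau_eq_b :
    sInf { c : Cardinal | ∃ X : Set ℝ, ¬ SfinGammaTau X ∧ Cardinal.mk X = c } = bCard := by
  classical
  obtain ⟨B₀, hB₀, hmk⟩ := NonSfinAux.b_mem
  have hκ : Cardinal.aleph0 ≤ Cardinal.mk ↥B₀ := by
    rw [hmk]; exact NonSfinAux.aleph0_le_b
  have hXXle : Cardinal.mk ↥(NonSfinAux.XX B₀) ≤ bCard := by
    refine le_trans Cardinal.mk_range_le ?_
    have hTT : Cardinal.mk (NonSfinAux.TT B₀) =
        (Cardinal.mk ↥B₀ + Cardinal.mk ↥B₀ * Cardinal.mk ↥B₀) + Cardinal.aleph0 := by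
      simp [Cardinal.mk_sum, Cardinal.mk_prod, Cardinal.lift_id, Cardinal.mk_nat]
    rw [hTT, Cardinal.mul_eq_self hκ, Cardinal.add_eq_self hκ,
      Cardinal.add_eq_left hκ hκ, hmk]
  have hlow : ∀ c ∈ { c : Cardinal | ∃ X : Set ℝ, ¬ SfinGammaTau X ∧ Cardinal.mk X = c },
      bCard ≤ c := by
    rintro c ⟨X, hX, rfl⟩
    by_contra hlt
    push_neg at hlt
    exact hX (NonSfinAux.sfin_of_lt_b hlt)
  have hwit : ¬ SfinGammaTau ↥(NonSfinAux.XX B₀) := NonSfinAux.not_sfin B₀ hB₀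
  have hXXmem : Cardinal.mk ↥(NonSfinAux.XX B₀) ∈
      { c : Cardinal | ∃ X : Set ℝ, ¬ SfinGammaTau X ∧ Cardinal.mk X = c } :=
    ⟨NonSfinAux.XX B₀, hwit, rfl⟩
  have hXXeq : Cardinal.mk ↥(NonSfinAux.XX B₀) = bCard :=
    le_antisymm hXXle (hlow _ hXXmem)
  apply le_antisymm
  · exact csInf_le (OrderBot.bddBelow _) (hXXeq ▸ hXXmem)
  · exact le_csInf ⟨_, hXXmem⟩ hlow
end
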